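/- arXiv:2401.11525 — 2 statements merged into one kernel-verified Lean document; each statement's English description precedes it below -/
import Mathlib

section
/- Let H be a graph with δ'(H) = 2 that contains an edge uv with d_H(u) = d_H(v) = 2 such that uv is the middle edge of an induced path P_4 in H. Then there exists a constant c_H such that rwsat(n, H) ≤ (3/2)·n + c_H for every positive integer n. -/
open SimpleGraph

/-- The edge-colored graph `(G, c)` contains a rainbow copy of `H`
passing through the edge `e`. -/
def IsRainbowCopyThrough {W V : Type*} (H : SimpleGraph W) (G : SimpleGraph V)
    (c : Sym2 V → ℕ) (e : Sym2 V) : Prop :=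
  ∃ f : W → V, Function.Injective f ∧
    (∀ ⦃a b⦄, H.Adj a b → G.Adj (f a) (f b)) ∧
    (∀ ⦃a b a' b'⦄, H.Adj a b → H.Adj a' b' →
      c s(f a, f b) = c s(f a', f b') → s(a, b) = s(a', b')) ∧
    ∃ a b, H.Adj a b ∧ e = s(f a, f b)

/-- The edge-colored graph `(G, c)` is weakly `H`-rainbow saturated: there is an
ordering `L` of the non-edges of `G` such that for every list `cs` of pairwise
distinct colors, adding the non-edges one at a time (the `i`-th one in color `cs i`)
always creates a new rainbow copy of `H` through the added edge. -/
def WeaklyRainbowSat {W V : Type*} [DecidableEq V] (H : SimpleGraph W)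
    (G : SimpleGraph V) (c : Sym2 V → ℕ) : Prop :=
  ∃ L : List (Sym2 V), L.Nodup ∧ (∀ e, e ∈ L ↔ e ∈ Gᶜ.edgeSet) ∧
    ∀ cs : List ℕ, cs.length = L.length → cs.Nodup →
      ∀ i : Fin L.length,
        IsRainbowCopyThrough H
          (G ⊔ SimpleGraph.fromEdgeSet {e | e ∈ L.take ((i : ℕ) + 1)})
          (((L.zip cs).take ((i : ℕ) + 1)).foldl
            (fun c' p => Function.update c' p.1 p.2) c)
          (L.get i)

/-- The weak rainbow saturation number `rwsat(n, H)`: the minimum number of edges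
in a weakly `H`-rainbow saturated edge-colored graph on `n` vertices, where by
convention the value is `n.choose 2` if no such graph exists. -/
noncomputable def rwsat {W : Type*} (H : SimpleGraph W) (n : ℕ) : ℕ :=
  sInf ({m | ∃ (G : SimpleGraph (Fin n)) (c : Sym2 (Fin n) → ℕ),
    WeaklyRainbowSat H G c ∧ G.edgeSet.ncard = m} ∪ {n.choose 2})

/-- `δ'(H)`: the minimum degree among vertices of nonzero degree. -/
noncomputable def minPosDeg {W : Type*} (H : SimpleGraph W) : ℕ :=
  sInf {d | ∃ v, (H.neighborSet v).ncard = d ∧ d ≠ 0}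

/-- `A` is contained in `B` as a subgraph (there is an injective graph
homomorphism from `A` to `B`). -/
def ContainsCopy {α β : Type*} (A : SimpleGraph α) (B : SimpleGraph β) : Prop :=
  ∃ f : α → β, Function.Injective f ∧ ∀ ⦃a b⦄, A.Adj a b → B.Adj (f a) (f b)

/-- The Turán number `ex(N, ℋ)` of the family `ℋ = {H - {u, v} : uv ∈ E(H)}`:
the maximum number of edges of an `N`-vertex graph containing no member of `ℋ`. -/
noncomputable def exFam {W : Type*} (H : SimpleGraph W) (N : ℕ) : ℕ :=
  sSup {m | ∃ G : SimpleGraph (Fin N),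
    (∀ u v : W, H.Adj u v → ¬ ContainsCopy (H.induce ({u, v}ᶜ : Set W)) G) ∧
    G.edgeSet.ncard = m}

/-- `f(H)`: the smallest `n` such that for each `N ∈ {n-1, n}` one has
`ex(N, ℋ) ≤ C(N,2) - 2N - 2`. -/
noncomputable def fH {W : Type*} (H : SimpleGraph W) : ℕ :=
  sInf {n | ∀ N ∈ ({n - 1, n} : Set ℕ),
    (exFam H N : ℤ) ≤ (N.choose 2 : ℤ) - 2 * N - 2}

/-- The coloring `c` is rainbow (injective) on the set `S` of edges. -/
def RainbowOn {V : Type*} (c : Sym2 V → ℕ) (S : Set (Sym2 V)) : Prop :=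
  ∀ e₁ ∈ S, ∀ e₂ ∈ S, c e₁ = c e₂ → e₁ = e₂



section Foldl
variable {V : Type*} [DecidableEq (Sym2 V)]

lemma foldl_update_not_mem (ps : List (Sym2 V × ℕ)) (c : Sym2 V → ℕ) (e : Sym2 V)
    (h : ∀ p ∈ ps, p.1 ≠ e) :
    ps.foldl (fun c' p => Function.update c' p.1 p.2) c e = c e := by
  induction ps generalizing c with
  | nil => rfl
  | cons p t ih =>
    simp only [List.foldl_cons]
    rw [ih _ (fun q hq => h q (List.mem_cons_of_mem _ hq))]
    exact Function.update_of_ne (fun hh : e = p.1 => h p List.mem_cons_self hh.symm) _ _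

lemma foldl_update_mem (ps : List (Sym2 V × ℕ)) (c : Sym2 V → ℕ) {k : Sym2 V} {val : ℕ}
    (h : (k, val) ∈ ps) (hnd : (ps.map Prod.fst).Nodup) :
    ps.foldl (fun c' p => Function.update c' p.1 p.2) c k = val := by
  induction ps generalizing c with
  | nil => simp at h
  | cons p t ih =>
    simp only [List.map_cons, List.nodup_cons] at hnd
    rcases List.mem_cons.1 h with h' | hmem
    · obtain rfl := h'.symm
      simp only [List.foldl_cons]
      rw [foldl_update_not_mem]
      · simp
      · intro q hq hq1
        have hh : q.1 ∈ List.map Prod.fst t := List.mem_map_of_mem (f := Prod.fst) hq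
        rw [hq1] at hh; exact hnd.1 hh
    · exact ih _ hmem hnd.2

end Foldl

section ColorVerts
variable {n : ℕ}

noncomputable def colorVerts (c : Sym2 (Fin n) → ℕ) (κ : ℕ) : Finset (Fin n) :=
  if h : ∃ p : Fin n × Fin n, c s(p.1, p.2) = κ then {h.choose.1, h.choose.2} else ∅

lemma colorVerts_card (c : Sym2 (Fin n) → ℕ) (κ : ℕ) : (colorVerts c κ).card ≤ 2 := by
  rw [colorVerts]
  split
  · exact Finset.card_insert_le _ _ |>.trans (by simp)
  · simp

lemma mem_colorVerts {c : Sym2 (Fin n) → ℕ} (hc : Function.Injective c) {p q : Fin n} {κ : ℕ}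
    (h : c s(p, q) = κ) : p ∈ colorVerts c κ ∧ q ∈ colorVerts c κ := by
  have hex : ∃ pr : Fin n × Fin n, c s(pr.1, pr.2) = κ := ⟨(p, q), h⟩
  have hsp := hex.choose_spec
  have : s(hex.choose.1, hex.choose.2) = s(p, q) := hc (hsp.trans h.symm)
  rw [colorVerts, dif_pos hex]
  rcases Sym2.eq_iff.1 this with ⟨h1, h2⟩ | ⟨h1, h2⟩ <;> subst h1 <;> subst h2 <;> simp
end ColorVerts

lemma card_quad_le {n : ℕ} (a b c d : Fin n) : ({a, b, c, d} : Finset (Fin n)).card ≤ 4 := by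
  apply le_trans (Finset.card_insert_le _ _)
  apply Nat.succ_le_succ
  apply le_trans (Finset.card_insert_le _ _)
  apply Nat.succ_le_succ
  apply le_trans (Finset.card_insert_le _ _)
  simp

lemma exists_rainbow_embed {W : Type*} [Fintype W] (H : SimpleGraph W) {u v x y : W}
    (huv : H.Adj u v) (hxu : H.Adj x u) (hvy : H.Adj v y)
    (hNu : ∀ w, H.Adj u w → w = x ∨ w = v) (hNv : ∀ w, H.Adj v w → w = u ∨ w = y)
    (hxv : x ≠ v) (hyu : y ≠ u) (hxyne : x ≠ y)
    (hnxv : ¬H.Adj x v) (hnuy : ¬H.Adj u y) (hnxy : ¬H.Adj x y)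
    {n : ℕ} (G' : SimpleGraph (Fin n)) (c' c : Sym2 (Fin n) → ℕ)
    (hc : Function.Injective c)
    (K : Finset (Fin n)) (hKcard : Fintype.card W + 10 ≤ K.card)
    (hKadj : ∀ p ∈ K, ∀ q ∈ K, p ≠ q → G'.Adj p q)
    (hKcol : ∀ p ∈ K, ∀ q ∈ K, p ≠ q → c' s(p, q) = c s(p, q))
    {α β ξ η : Fin n} (hab : α ≠ β) (hax : α ≠ ξ) (hae : α ≠ η)
    (hbx : β ≠ ξ) (hbe : β ≠ η) (hxe : ξ ≠ η) (hxK : ξ ∈ K) (heK : η ∈ K)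
    (hA1 : G'.Adj α β) (hA2 : G'.Adj α ξ) (hA3 : G'.Adj β η)
    (h12 : c' s(α, β) ≠ c' s(α, ξ)) (h13 : c' s(α, β) ≠ c' s(β, η))
    (h23 : c' s(α, ξ) ≠ c' s(β, η))
    {e : Sym2 (Fin n)} (he : e = s(α, β) ∨ e = s(ξ, α)) :
    IsRainbowCopyThrough H G' c' e := by
  classical
  have : Nonempty W := ⟨u⟩
  set κ1 := c' s(α, β) with hκ1
  set κ2 := c' s(α, ξ) with hκ2
  set κ3 := c' s(β, η) with hκ3
  set B : Finset (Fin n) := colorVerts c κ1 ∪ colorVerts c κ2 ∪ colorVerts c κ3 with hB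
  set C0 : Finset (Fin n) := K \ (({α, β, ξ, η} : Finset (Fin n)) ∪ B) with hC0
  have hBcard : B.card ≤ 6 := by
    apply le_trans (Finset.card_union_le _ _)
    have := Finset.card_union_le (colorVerts c κ1) (colorVerts c κ2)
    have h1 := colorVerts_card c κ1
    have h2 := colorVerts_card c κ2
    have h3 := colorVerts_card c κ3
    omega
  have hC0card : Fintype.card W ≤ C0.card := by
    have h1 := Finset.le_card_sdiff (({α, β, ξ, η} : Finset (Fin n)) ∪ B) K
    rw [← hC0] at h1
    have h2 := Finset.card_union_le ({α, β, ξ, η} : Finset (Fin n)) B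
    have h3 := card_quad_le α β ξ η
    omega
  have hC0spec : ∀ z ∈ C0, z ∈ K ∧ z ∉ B ∧ z ≠ α ∧ z ≠ β ∧ z ≠ ξ ∧ z ≠ η := by
    intro z hz
    rw [hC0] at hz
    simp only [Finset.mem_sdiff, Finset.mem_union, Finset.mem_insert,
      Finset.mem_singleton] at hz
    push_neg at hz
    exact ⟨hz.1, hz.2.2, hz.2.1.1, hz.2.1.2.1, hz.2.1.2.2.1, hz.2.1.2.2.2⟩
  -- the embedding of the rest of the vertices
  have hcardW : Fintype.card W ≤ Fintype.card {z // z ∈ C0} := by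
    rwa [Fintype.card_coe]
  obtain ⟨g⟩ := Function.Embedding.nonempty_of_card_le hcardW
  set g' : W → Fin n := fun w => (g w : Fin n) with hg'
  have hg'inj : Function.Injective g' := fun a b h => g.injective (Subtype.ext h)
  have hg'mem : ∀ w, g' w ∈ C0 := fun w => (g w).2
  have hu_v : u ≠ v := huv.ne
  have hx_u : x ≠ u := hxu.ne
  have hv_y : v ≠ y := hvy.ne
  set f : W → Fin n := fun w =>
    if w = u then α else if w = v then β else if w = x then ξ else if w = y then η else g' w
    with hf
  have hfu : f u = α := by simp [hf]
  have hfv : f v = β := by simp [hf, hu_v.symm]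
  have hfx : f x = ξ := by simp [hf, hx_u, hxv]
  have hfy : f y = η := by simp [hf, hyu, hv_y.symm, hxyne.symm]
  have hfR : ∀ w, w ≠ u → w ≠ v → w ≠ x → w ≠ y → f w = g' w := by
    intro w h1 h2 h3 h4; simp [hf, h1, h2, h3, h4]
  have hclass : ∀ w : W, (w = u ∧ f w = α) ∨ (w = v ∧ f w = β) ∨ (w = x ∧ f w = ξ) ∨
      (w = y ∧ f w = η) ∨ (w ≠ u ∧ w ≠ v ∧ w ≠ x ∧ w ≠ y ∧ f w = g' w ∧ f w ∈ C0) := by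
    intro w
    by_cases h1 : w = u
    · exact Or.inl ⟨h1, h1 ▸ hfu⟩
    by_cases h2 : w = v
    · exact Or.inr (Or.inl ⟨h2, h2 ▸ hfv⟩)
    by_cases h3 : w = x
    · exact Or.inr (Or.inr (Or.inl ⟨h3, h3 ▸ hfx⟩))
    by_cases h4 : w = y
    · exact Or.inr (Or.inr (Or.inr (Or.inl ⟨h4, h4 ▸ hfy⟩)))
    · have := hfR w h1 h2 h3 h4
      exact Or.inr (Or.inr (Or.inr (Or.inr ⟨h1, h2, h3, h4, this, this ▸ hg'mem w⟩)))
  -- injectivity via a left inverse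
  have hfinj : Function.Injective f := by
    have hLI : Function.LeftInverse
        (fun z : Fin n => if z = α then u else if z = β then v else if z = ξ then x
          else if z = η then y else Function.invFun g' z) f := by
      intro w
      rcases hclass w with ⟨rfl, hw⟩ | ⟨rfl, hw⟩ | ⟨rfl, hw⟩ | ⟨rfl, hw⟩ |
        ⟨h1, h2, h3, h4, hw, hwC⟩ <;> rw [hw]
      · simp
      · simp [hab.symm]
      · simp [hax.symm, hbx.symm]
      · simp [hae.symm, hbe.symm, hxe.symm]
      · obtain ⟨_, _, hz1, hz2, hz3, hz4⟩ := hC0spec _ (hg'mem w)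
        simp only [hz1, hz2, hz3, hz4, if_neg]
        exact Function.leftInverse_invFun hg'inj w
    exact hLI.injective
  have hC0K : ∀ z ∈ C0, z ∈ K := fun z hz => (hC0spec z hz).1
  -- adjacency
  have hfadj : ∀ ⦃a b : W⦄, H.Adj a b → G'.Adj (f a) (f b) := by
    intro a b hab'
    rcases hclass a with ⟨rfl, ha⟩ | ⟨rfl, ha⟩ | ⟨rfl, ha⟩ | ⟨rfl, ha⟩ |
      ⟨ha1, ha2, ha3, ha4, ha5, ha6⟩
    · rcases hNu b hab' with rfl | rfl
      · rw [ha, hfx]; exact hA2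
      · rw [ha, hfv]; exact hA1
    · rcases hNv b hab' with rfl | rfl
      · rw [ha, hfu]; exact hA1.symm
      · rw [ha, hfy]; exact hA3
    · by_cases hbu : b = u
      · subst hbu; rw [ha, hfu]; exact hA2.symm
      · have hbv : b ≠ v := fun h => hnxv (h ▸ hab')
        have hby : b ≠ y := fun h => hnxy (h ▸ hab')
        have hbx' : b ≠ a := fun h => (h ▸ hab').ne rfl
        have hbC : f b ∈ C0 := by rw [hfR b hbu hbv hbx' hby]; exact hg'mem b
        rw [ha]
        exact hKadj ξ hxK (f b) (hC0K _ hbC) (Ne.symm (hC0spec _ hbC).2.2.2.2.1)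
    · by_cases hbv : b = v
      · subst hbv; rw [ha, hfv]; exact hA3.symm
      · have hbu : b ≠ u := fun h => hnuy (by rw [h] at hab'; exact hab'.symm)
        have hbx' : b ≠ x := fun h => hnxy (by rw [h] at hab'; exact hab'.symm)
        have hby : b ≠ a := fun h => (h ▸ hab').ne rfl
        have hbC : f b ∈ C0 := by rw [hfR b hbu hbv hbx' hby]; exact hg'mem b
        rw [ha]
        exact hKadj η heK (f b) (hC0K _ hbC) (Ne.symm (hC0spec _ hbC).2.2.2.2.2)
    · have ha6' := ha6
      rcases hclass b with ⟨rfl, hb⟩ | ⟨rfl, hb⟩ | ⟨rfl, hb⟩ | ⟨rfl, hb⟩ |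
        ⟨hb1, hb2, hb3, hb4, hb5, hb6⟩
      · rcases hNu a hab'.symm with rfl | rfl
        · exact absurd rfl ha3
        · exact absurd rfl ha2
      · rcases hNv a hab'.symm with rfl | rfl
        · exact absurd rfl ha1
        · exact absurd rfl ha4
      · rw [hb]
        exact hKadj (f a) (hC0K _ ha6) ξ hxK ((hC0spec _ ha6).2.2.2.2.1)
      · rw [hb]
        exact hKadj (f a) (hC0K _ ha6) η heK ((hC0spec _ ha6).2.2.2.2.2)
      · refine hKadj (f a) (hC0K _ ha6) (f b) (hC0K _ hb6) ?_
        rw [ha5, hb5]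
        exact fun h => hab'.ne (hg'inj h)
  -- classification of image edges
  have hcls : ∀ ⦃a b : W⦄, H.Adj a b →
      (s(a, b) = s(u, v) ∧ s(f a, f b) = s(α, β)) ∨
      (s(a, b) = s(x, u) ∧ s(f a, f b) = s(ξ, α)) ∨
      (s(a, b) = s(v, y) ∧ s(f a, f b) = s(β, η)) ∨
      (f a ∈ K ∧ f b ∈ K ∧ (f a ∈ C0 ∨ f b ∈ C0)) := by
    intro a b hab'
    rcases hclass a with ⟨rfl, ha⟩ | ⟨rfl, ha⟩ | ⟨rfl, ha⟩ | ⟨rfl, ha⟩ |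
      ⟨ha1, ha2, ha3, ha4, ha5, ha6⟩
    · rcases hNu b hab' with rfl | rfl
      · exact Or.inr (Or.inl ⟨Sym2.eq_swap, by rw [ha, hfx]; exact Sym2.eq_swap⟩)
      · exact Or.inl ⟨rfl, by rw [ha, hfv]⟩
    · rcases hNv b hab' with rfl | rfl
      · exact Or.inl ⟨Sym2.eq_swap, by rw [ha, hfu]; exact Sym2.eq_swap⟩
      · exact Or.inr (Or.inr (Or.inl ⟨rfl, by rw [ha, hfy]⟩))
    · by_cases hbu : b = u
      · subst hbu; exact Or.inr (Or.inl ⟨rfl, by rw [ha, hfu]⟩)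
      · have hbv : b ≠ v := fun h => hnxv (h ▸ hab')
        have hby : b ≠ y := fun h => hnxy (h ▸ hab')
        have hbx' : b ≠ a := fun h => (h ▸ hab').ne rfl
        have hbC : f b ∈ C0 := by rw [hfR b hbu hbv hbx' hby]; exact hg'mem b
        exact Or.inr (Or.inr (Or.inr ⟨by rw [ha]; exact hxK, hC0K _ hbC, Or.inr hbC⟩))
    · by_cases hbv : b = v
      · subst hbv
        exact Or.inr (Or.inr (Or.inl ⟨Sym2.eq_swap, by rw [ha, hfv]; exact Sym2.eq_swap⟩))
      · have hbu : b ≠ u := fun h => hnuy (by rw [h] at hab'; exact hab'.symm)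
        have hbx' : b ≠ x := fun h => hnxy (by rw [h] at hab'; exact hab'.symm)
        have hby : b ≠ a := fun h => (h ▸ hab').ne rfl
        have hbC : f b ∈ C0 := by rw [hfR b hbu hbv hbx' hby]; exact hg'mem b
        exact Or.inr (Or.inr (Or.inr ⟨by rw [ha]; exact heK, hC0K _ hbC, Or.inr hbC⟩))
    · rcases hclass b with ⟨rfl, hb⟩ | ⟨rfl, hb⟩ | ⟨rfl, hb⟩ | ⟨rfl, hb⟩ |
        ⟨hb1, hb2, hb3, hb4, hb5, hb6⟩
      · rcases hNu a hab'.symm with rfl | rfl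
        · exact absurd rfl ha3
        · exact absurd rfl ha2
      · rcases hNv a hab'.symm with rfl | rfl
        · exact absurd rfl ha1
        · exact absurd rfl ha4
      · exact Or.inr (Or.inr (Or.inr ⟨hC0K _ ha6, by rw [hb]; exact hxK, Or.inl ha6⟩))
      · exact Or.inr (Or.inr (Or.inr ⟨hC0K _ ha6, by rw [hb]; exact heK, Or.inl ha6⟩))
      · exact Or.inr (Or.inr (Or.inr ⟨hC0K _ ha6, hC0K _ hb6, Or.inl ha6⟩))
  -- the three special colors, for dispatching mixed cases
  have hswap2 : c' s(ξ, α) = κ2 := by rw [hκ2, Sym2.eq_swap]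
  have hBdisj : ∀ z ∈ C0, z ∉ B := fun z hz => (hC0spec z hz).2.1
  have hother : ∀ ⦃a b : W⦄, H.Adj a b → f a ∈ K → f b ∈ K → (f a ∈ C0 ∨ f b ∈ C0) →
      ∀ κ, κ = κ1 ∨ κ = κ2 ∨ κ = κ3 → c' s(f a, f b) ≠ κ := by
    intro a b hab' hK1 hK2 hC κ hκ hcol
    have hne : f a ≠ f b := fun h => hab'.ne (hfinj h)
    rw [hKcol (f a) hK1 (f b) hK2 hne] at hcol
    have hmem := mem_colorVerts hc hcol
    have hBm : f a ∈ B ∧ f b ∈ B := by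
      rcases hκ with rfl | rfl | rfl
      · exact ⟨Finset.mem_union_left _ (Finset.mem_union_left _ hmem.1),
          Finset.mem_union_left _ (Finset.mem_union_left _ hmem.2)⟩
      · exact ⟨Finset.mem_union_left _ (Finset.mem_union_right _ hmem.1),
          Finset.mem_union_left _ (Finset.mem_union_right _ hmem.2)⟩
      · exact ⟨Finset.mem_union_right _ hmem.1, Finset.mem_union_right _ hmem.2⟩
    rcases hC with hC | hC
    · exact hBdisj _ hC hBm.1
    · exact hBdisj _ hC hBm.2
  refine ⟨f, hfinj, hfadj, ?_, ?_⟩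
  · -- rainbow
    intro a b a' b' h1 h2 hcol
    rcases hcls h1 with ⟨hE, hI⟩ | ⟨hE, hI⟩ | ⟨hE, hI⟩ | ⟨hK1, hK2, hC⟩ <;>
      rcases hcls h2 with ⟨hE', hI'⟩ | ⟨hE', hI'⟩ | ⟨hE', hI'⟩ | ⟨hK1', hK2', hC'⟩
    · exact hE.trans hE'.symm
    · rw [hI, hI', hswap2] at hcol; exact absurd hcol h12
    · rw [hI, hI'] at hcol; exact absurd hcol h13
    · rw [hI] at hcol
      exact absurd hcol.symm (hother h2 hK1' hK2' hC' _ (Or.inl rfl))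
    · rw [hI, hI', hswap2] at hcol; exact absurd hcol.symm h12
    · exact hE.trans hE'.symm
    · rw [hI, hI', hswap2] at hcol; exact absurd hcol h23
    · rw [hI, hswap2] at hcol
      exact absurd hcol.symm (hother h2 hK1' hK2' hC' _ (Or.inr (Or.inl rfl)))
    · rw [hI, hI'] at hcol; exact absurd hcol.symm h13
    · rw [hI, hI', hswap2] at hcol; exact absurd hcol.symm h23
    · exact hE.trans hE'.symm
    · rw [hI] at hcol
      exact absurd hcol.symm (hother h2 hK1' hK2' hC' _ (Or.inr (Or.inr rfl)))
    · rw [hI'] at hcol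
      exact absurd hcol (hother h1 hK1 hK2 hC _ (Or.inl rfl))
    · rw [hI', hswap2] at hcol
      exact absurd hcol (hother h1 hK1 hK2 hC _ (Or.inr (Or.inl rfl)))
    · rw [hI'] at hcol
      exact absurd hcol (hother h1 hK1 hK2 hC _ (Or.inr (Or.inr rfl)))
    · -- both generic: use injectivity of c
      have hne : f a ≠ f b := fun h => h1.ne (hfinj h)
      have hne' : f a' ≠ f b' := fun h => h2.ne (hfinj h)
      rw [hKcol (f a) hK1 (f b) hK2 hne, hKcol (f a') hK1' (f b') hK2' hne'] at hcol
      have := hc hcol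
      rw [← Sym2.map_pair_eq f, ← Sym2.map_pair_eq f] at this
      exact Sym2.map.injective hfinj this
  · -- the edge through
    rcases he with rfl | rfl
    · exact ⟨u, v, huv, by rw [hfu, hfv]⟩
    · exact ⟨x, u, hxu, by rw [hfx, hfu]⟩




section Construction

/-- lone outside vertex -/
def RWlone (n N a : ℕ) : Prop := N ≤ a ∧ Even (a - N) ∧ a + 1 = n
/-- partner relation of outside vertices -/
def RWprel (N a b : ℕ) : Prop :=
  N ≤ a ∧ N ≤ b ∧ ((Even (a - N) ∧ b = a + 1) ∨ (Even (b - N) ∧ a = b + 1))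
/-- anchoring of outside vertices to the core -/
def RWanch (n N a b : ℕ) : Prop := N ≤ a ∧ (b = 0 ∨ (b = 1 ∧ RWlone n N a))

/-- The construction graph: a clique on the first `N` vertices; the remaining
vertices are grouped in pairs (with possibly one lone vertex), each pair forming
a triangle with vertex `0`, the lone vertex joined to `0` and `1`. -/
def conG (n N : ℕ) : SimpleGraph (Fin n) where
  Adj i j := i ≠ j ∧ ((i.val < N ∧ j.val < N) ∨ RWprel N i.val j.val ∨
    RWanch n N i.val j.val ∨ RWanch n N j.val i.val)
  symm := by
    constructor
    rintro i j ⟨hne, h⟩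
    refine ⟨hne.symm, ?_⟩
    unfold RWprel at *
    tauto
  loopless := ⟨fun i h => h.1 rfl⟩

variable {n N : ℕ}

lemma prel_ne {a b : ℕ} (h : RWprel N a b) : a ≠ b := by
  rcases h with ⟨h1, h2, ⟨h3, rfl⟩ | ⟨h3, rfl⟩⟩ <;> omega

lemma prel_symm {a b : ℕ} (h : RWprel N a b) : RWprel N b a := by
  unfold RWprel at *; tauto

lemma lone_not_prel {a b : ℕ} (hl : RWlone n N a) (hb : b < n) : ¬RWprel N a b := by
  obtain ⟨hl1, hl2, hl3⟩ := hl
  rintro ⟨h1, h2, ⟨h3, rfl⟩ | ⟨h3, h4⟩⟩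
  · omega
  · obtain ⟨r, hr⟩ := h3
    obtain ⟨t, ht⟩ := hl2
    omega

lemma prel_unique {a b b' : ℕ} (h : RWprel N a b) (h' : RWprel N a b') : b = b' := by
  obtain ⟨h1, h2, hc⟩ := h
  obtain ⟨h1', h2', hc'⟩ := h'
  rcases hc with ⟨he, rfl⟩ | ⟨he, he2⟩ <;> rcases hc' with ⟨he', rfl⟩ | ⟨he', he2'⟩ <;>
    [skip; skip; skip; omega] <;>
    obtain ⟨r, hr⟩ := he <;> obtain ⟨t, ht⟩ := he' <;> omega

lemma partner_exists {i : Fin n} (hN : 0 < N) (hi : N ≤ i.val) (hnl : ¬RWlone n N i.val) :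
    ∃ b : Fin n, N ≤ b.val ∧ RWprel N i.val b.val := by
  rcases Nat.even_or_odd (i.val - N) with he | ho
  · have h1 : i.val + 1 < n := by
      rcases Nat.lt_or_ge (i.val + 1) n with h | h
      · exact h
      · exact absurd ⟨hi, he, by omega⟩ hnl
    refine ⟨⟨i.val + 1, h1⟩, ?_, hi, ?_, Or.inl ⟨he, ?_⟩⟩ <;> simp only [Fin.val_mk] <;> omega
  · obtain ⟨r, hr⟩ := ho
    refine ⟨⟨i.val - 1, by omega⟩, ?_, hi, ?_, Or.inr ⟨⟨r, ?_⟩, ?_⟩⟩ <;>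
      simp only [Fin.val_mk] <;> omega

lemma conG_core_adj {i j : Fin n} (hi : i.val < N) (hj : j.val < N) (hne : i ≠ j) :
    (conG n N).Adj i j := ⟨hne, Or.inl ⟨hi, hj⟩⟩

lemma conG_anch0 {i j : Fin n} (hN : 0 < N) (hi : N ≤ i.val) (hj : j.val = 0) :
    (conG n N).Adj i j :=
  ⟨fun h => by rw [h] at hi; omega, Or.inr (Or.inr (Or.inl ⟨hi, Or.inl hj⟩))⟩

lemma conG_anch1 {i j : Fin n} (hN : 1 < N) (hi : RWlone n N i.val) (hj : j.val = 1) :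
    (conG n N).Adj i j :=
  ⟨fun h => by have h1 := hi.1; rw [h] at h1; omega,
    Or.inr (Or.inr (Or.inl ⟨hi.1, Or.inr ⟨hj, hi⟩⟩))⟩

lemma conG_prel_adj {i j : Fin n} (h : RWprel N i.val j.val) : (conG n N).Adj i j :=
  ⟨fun hh => prel_ne h (by rw [hh]), Or.inr (Or.inl h)⟩

lemma not_adj_out_core {s j : Fin n} (hs : N ≤ s.val) (hj2 : 2 ≤ j.val) (hjN : j.val < N) :
    ¬(conG n N).Adj s j := by
  rintro ⟨hne, (⟨h1, h2⟩ | ⟨h1, h2, h3⟩ | ⟨h1, h2⟩ | ⟨h1, h2⟩)⟩ <;> omega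

lemma not_adj_out_out {s t : Fin n} (hN : 2 ≤ N) (hs : N ≤ s.val) (ht : N ≤ t.val)
    (hnp : ¬RWprel N s.val t.val) : ¬(conG n N).Adj s t := by
  rintro ⟨hne, (⟨h1, h2⟩ | h | ⟨h1, h2 | ⟨h2, h3⟩⟩ | ⟨h1, h2 | ⟨h2, h3⟩⟩)⟩ <;>
    first | exact hnp h | omega

end Construction


section Count
variable {n N : ℕ}

open Finset in
lemma conG_edge_bound (hN : 4 ≤ N) (hNn : N ≤ n) :
    2 * (conG n N).edgeSet.ncard ≤ 3 * n + 2 * (N * N) := by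
  classical
  have hcount : (conG n N).edgeSet.ncard = (conG n N).edgeFinset.card := by
    rw [← SimpleGraph.coe_edgeFinset, Set.ncard_coe_finset]
  rw [hcount, ← SimpleGraph.sum_degrees_eq_twice_card_edges]
  set coreF : Finset (Fin n) := univ.filter (fun v : Fin n => v.val < N) with hcoreF
  have hcore_card : coreF.card ≤ N := by
    have hmap : ∀ v ∈ coreF, (⟨v.val % N, Nat.mod_lt _ (by omega)⟩ : Fin N) ∈
        (univ : Finset (Fin N)) := fun v _ => mem_univ _
    have hinj : Set.InjOn (fun v : Fin n => (⟨v.val % N, Nat.mod_lt _ (by omega)⟩ : Fin N))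
        coreF := by
      intro a ha b hb hab
      simp only [hcoreF, mem_coe, mem_filter] at ha hb
      have : a.val % N = b.val % N := congrArg Fin.val hab
      rw [Nat.mod_eq_of_lt ha.2, Nat.mod_eq_of_lt hb.2] at this
      exact Fin.ext this
    have := Finset.card_le_card_of_injOn _ hmap hinj
    simpa using this
  have hdeg : ∀ v : Fin n, (conG n N).degree v ≤
      (if v.val < N then N else 2) + (if v.val = 0 then n else 0) +
        (if v.val = 1 then 1 else 0) := by
    intro v
    by_cases hv : v.val < N
    · by_cases hv0 : v.val = 0
      · have h1 : (conG n N).degree v ≤ n := by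
          rw [SimpleGraph.degree]
          exact (Finset.card_le_univ _).trans (by simp)
        simp only [hv, hv0, if_pos]
        omega
      · by_cases hv1 : v.val = 1
        · have hsub : (conG n N).neighborFinset v ⊆
              insert (⟨n - 1, by omega⟩ : Fin n) coreF := by
            intro w hw
            rw [SimpleGraph.mem_neighborFinset] at hw
            rcases hw.2 with ⟨h1, h2⟩ | ⟨h1, h2, h3⟩ | ⟨h1, h2 | ⟨h2, h3⟩⟩ | ⟨h1, h2 | ⟨h2, h3⟩⟩
            · exact mem_insert_of_mem (by simp [hcoreF, h2])
            · omega
            · omega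
            · omega
            · omega
            · refine mem_insert.2 (Or.inl (Fin.ext ?_))
              obtain ⟨hL1, hL2, hL3⟩ := h3
              simp only [Fin.val_mk]
              omega
          have hcard := (Finset.card_le_card hsub).trans (Finset.card_insert_le _ _)
          rw [SimpleGraph.degree, if_pos hv, if_neg hv0, if_pos hv1]
          omega
        · have hsub : (conG n N).neighborFinset v ⊆ coreF := by
            intro w hw
            rw [SimpleGraph.mem_neighborFinset] at hw
            rcases hw.2 with ⟨h1, h2⟩ | ⟨h1, h2, h3⟩ | ⟨h1, h2 | ⟨h2, h3⟩⟩ | ⟨h1, h2 | ⟨h2, h3⟩⟩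
            · simp [hcoreF, h2]
            all_goals omega
          have hcard := Finset.card_le_card hsub
          rw [SimpleGraph.degree, if_pos hv, if_neg hv0, if_neg hv1]
          omega
    · have hvN : N ≤ v.val := le_of_not_gt hv
      have hv0 : ¬v.val = 0 := by omega
      have hv1 : ¬v.val = 1 := by omega
      have h2 : (conG n N).degree v ≤ 2 := by
        by_cases hl : RWlone n N v.val
        · have hsub : (conG n N).neighborFinset v ⊆
              {(⟨0, by omega⟩ : Fin n), (⟨1, by omega⟩ : Fin n)} := by
            intro w hw
            rw [SimpleGraph.mem_neighborFinset] at hw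
            rcases hw.2 with ⟨h1, h2⟩ | hp | ⟨h1, h2 | ⟨h2, h3⟩⟩ | ⟨h1, h2 | ⟨h2, h3⟩⟩
            · omega
            · exact absurd hp (lone_not_prel hl w.isLt)
            · exact mem_insert.2 (Or.inl (Fin.ext (by simp only [Fin.val_mk]; omega)))
            · refine mem_insert.2 (Or.inr (mem_singleton.2 (Fin.ext ?_)))
              simp only [Fin.val_mk]; omega
            · omega
            · omega
          exact (Finset.card_le_card hsub).trans ((card_insert_le _ _).trans (by simp))
        · obtain ⟨b, hbN, hbp⟩ := partner_exists (by omega) hvN hl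
          have hsub : (conG n N).neighborFinset v ⊆ {b, (⟨0, by omega⟩ : Fin n)} := by
            intro w hw
            rw [SimpleGraph.mem_neighborFinset] at hw
            rcases hw.2 with ⟨h1, h2⟩ | hp | ⟨h1, h2 | ⟨h2, h3⟩⟩ | ⟨h1, h2 | ⟨h2, h3⟩⟩
            · omega
            · exact mem_insert.2 (Or.inl (Fin.ext (prel_unique hp hbp)))
            · refine mem_insert.2 (Or.inr (mem_singleton.2 (Fin.ext ?_)))
              simp only [Fin.val_mk]; omega
            · exact absurd hl (fun _ => hl h3)
            · omega
            · omega
          exact (Finset.card_le_card hsub).trans ((card_insert_le _ _).trans (by simp))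
      rw [if_neg hv, if_neg hv0, if_neg hv1]
      omega
  calc ∑ v : Fin n, (conG n N).degree v
      ≤ ∑ v : Fin n, ((if v.val < N then N else 2) + (if v.val = 0 then n else 0) +
        (if v.val = 1 then 1 else 0)) := Finset.sum_le_sum (fun v _ => hdeg v)
    _ ≤ 3 * n + 2 * (N * N) := by
        rw [Finset.sum_add_distrib, Finset.sum_add_distrib]
        have hA : ∑ v : Fin n, (if v.val < N then N else 2) ≤ N * N + 2 * n := by
          rw [Finset.sum_ite, Finset.sum_const, Finset.sum_const, smul_eq_mul, smul_eq_mul]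
          have hB1 : (univ.filter (fun v : Fin n => v.val < N)).card * N ≤ N * N :=
            Nat.mul_le_mul_right _ hcore_card
          have hB2 : (univ.filter (fun v : Fin n => ¬v.val < N)).card * 2 ≤ n * 2 :=
            Nat.mul_le_mul_right _ ((Finset.card_filter_le _ _).trans (by simp))
          omega
        have hB : ∑ v : Fin n, (if v.val = 0 then n else 0) ≤ n := by
          rw [Finset.sum_ite, Finset.sum_const, Finset.sum_const, smul_eq_mul, smul_eq_mul]
          have : (univ.filter (fun v : Fin n => v.val = 0)).card ≤ 1 := by
            refine Finset.card_le_one.2 (fun a ha b hb => Fin.ext ?_)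
            simp only [mem_filter] at ha hb
            omega
          have := Nat.mul_le_mul_right n this
          omega
        have hC : ∑ v : Fin n, (if v.val = 1 then 1 else 0) ≤ 1 := by
          rw [Finset.sum_ite, Finset.sum_const, Finset.sum_const, smul_eq_mul, smul_eq_mul]
          have : (univ.filter (fun v : Fin n => v.val = 1)).card ≤ 1 := by
            refine Finset.card_le_one.2 (fun a ha b hb => Fin.ext ?_)
            simp only [mem_filter] at ha hb
            omega
          omega
        have hNN : 16 ≤ N * N := Nat.mul_le_mul hN hN
        omega

end Count


section Sat

lemma list_get_mem_take {α : Type*} (L : List α) (k m : ℕ) (hk : k < L.length) (hkm : k < m) :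
    L.get ⟨k, hk⟩ ∈ L.take m := by
  have h1 : (L.take m)[k]? = L[k]? := List.getElem?_take_of_lt hkm
  rw [List.getElem?_eq_getElem hk] at h1
  obtain ⟨h, e⟩ := List.getElem?_eq_some_iff.1 h1
  rw [List.get_eq_getElem]
  exact e ▸ List.getElem_mem h

lemma zip_pair_mem_take {α β : Type*} (L : List α) (cs : List β) (k m : ℕ)
    (hk1 : k < L.length) (hk2 : k < cs.length) (hkm : k < m) :
    (L.get ⟨k, hk1⟩, cs.get ⟨k, hk2⟩) ∈ (L.zip cs).take m := by
  have hz : (L.zip cs)[k]? = some (L[k], cs[k]) := by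
    rw [List.getElem?_zip_eq_some]
    exact ⟨List.getElem?_eq_getElem hk1, List.getElem?_eq_getElem hk2⟩
  have h1 : ((L.zip cs).take m)[k]? = some (L[k], cs[k]) := by
    rw [List.getElem?_take_of_lt hkm, hz]
  obtain ⟨h, e⟩ := List.getElem?_eq_some_iff.1 h1
  simp only [List.get_eq_getElem]
  exact e ▸ List.getElem_mem h

set_option maxHeartbeats 2000000 in

lemma take_get_eq {α : Type*} (L : List α) (m k : ℕ) (hk : k < (L.take m).length) :
    (L.take m).get ⟨k, hk⟩ =
      L.get ⟨k, by rw [List.length_take] at hk; omega⟩ := by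
  have hkm : k < m := by rw [List.length_take] at hk; omega
  have hkL : k < L.length := by rw [List.length_take] at hk; omega
  have h := List.getElem?_take_of_lt (l := L) hkm
  rw [List.getElem?_eq_getElem hk, List.getElem?_eq_getElem hkL] at h
  simpa using h

set_option maxHeartbeats 1000000 in
open Finset in
lemma conG_sat {W : Type*} [Fintype W] (H : SimpleGraph W) {u v x y : W}
    (huv : H.Adj u v) (hxu : H.Adj x u) (hvy : H.Adj v y)
    (hNu : ∀ w, H.Adj u w → w = x ∨ w = v) (hNv : ∀ w, H.Adj v w → w = u ∨ w = y)
    (hxv : x ≠ v) (hyu : y ≠ u) (hxyne : x ≠ y)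
    (hnxv : ¬H.Adj x v) (hnuy : ¬H.Adj u y) (hnxy : ¬H.Adj x y)
    {n N : ℕ} (hNW : N = Fintype.card W + 10) (hNn : N ≤ n)
    (c : Sym2 (Fin n) → ℕ) (hc : Function.Injective c) :
    WeaklyRainbowSat H (conG n N) c := by
  classical
  have hN4 : 4 ≤ N := by omega
  set G := conG n N with hG
  set P1 : Finset (Sym2 (Fin n)) := Gᶜ.edgeFinset.filter (fun e => ∃ p ∈ e, p.val < N) with hP1
  set P2 : Finset (Sym2 (Fin n)) := Gᶜ.edgeFinset.filter (fun e => ¬∃ p ∈ e, p.val < N) with hP2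
  set L : List (Sym2 (Fin n)) := P1.toList ++ P2.toList with hL
  have hLnd : L.Nodup := by
    refine List.Nodup.append (Finset.nodup_toList _) (Finset.nodup_toList _) ?_
    intro a ha1 ha2
    rw [Finset.mem_toList, hP1, mem_filter] at ha1
    rw [Finset.mem_toList, hP2, mem_filter] at ha2
    exact ha2.2 ha1.2
  have hLmem : ∀ e, e ∈ L ↔ e ∈ Gᶜ.edgeSet := by
    intro e
    rw [hL, List.mem_append, Finset.mem_toList, Finset.mem_toList, hP1, hP2, mem_filter,
      mem_filter, ← SimpleGraph.mem_edgeFinset]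
    by_cases h : ∃ p ∈ e, p.val < N
    · simp [h]
    · simp [h]
  -- the core
  set K : Finset (Fin n) := univ.filter (fun z : Fin n => z.val < N) with hK
  have hKmem : ∀ z : Fin n, z ∈ K ↔ z.val < N := by
    intro z; rw [hK, mem_filter]; simp
  have hKcard : Fintype.card W + 10 ≤ K.card := by
    have hmap : ∀ w ∈ (univ : Finset (Fin N)), (⟨w.val, lt_of_lt_of_le w.isLt hNn⟩ : Fin n) ∈ K :=
      fun w _ => (hKmem _).2 w.isLt
    have hinj : Set.InjOn (fun w : Fin N => (⟨w.val, lt_of_lt_of_le w.isLt hNn⟩ : Fin n))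
        (univ : Finset (Fin N)) := by
      intro a _ b _ hab
      have := congrArg Fin.val hab
      simp only [Fin.val_mk] at this
      exact Fin.ext this
    have := Finset.card_le_card_of_injOn _ hmap hinj
    simpa [hNW] using this
  refine ⟨L, hLnd, hLmem, ?_⟩
  intro cs hlen hcs i
  set G2 : SimpleGraph (Fin n) := G ⊔ SimpleGraph.fromEdgeSet {e | e ∈ L.take ((i : ℕ) + 1)}
    with hG2
  set ci : Sym2 (Fin n) → ℕ :=
    ((L.zip cs).take ((i : ℕ) + 1)).foldl (fun c' p => Function.update c' p.1 p.2) c with hci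
  have hLcs : L.length ≤ cs.length := le_of_eq hlen.symm
  have hkeys : (((L.zip cs).take ((i : ℕ) + 1)).map Prod.fst) = L.take ((i : ℕ) + 1) := by
    rw [List.map_take, List.map_fst_zip hLcs]
  have hnotmem : ∀ e', e' ∉ L → ci e' = c e' := by
    intro e' h
    refine foldl_update_not_mem _ _ _ ?_
    intro p hp hpe
    refine h ?_
    have : p.1 ∈ ((L.zip cs).take ((i : ℕ) + 1)).map Prod.fst := List.mem_map_of_mem hp
    rw [hkeys] at this
    exact hpe ▸ List.take_subset _ _ this
  have hGcol : ∀ p q : Fin n, G.Adj p q → ci s(p, q) = c s(p, q) := by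
    intro p q h
    refine hnotmem _ (fun hmem => ?_)
    have := (hLmem _).1 hmem
    rw [SimpleGraph.mem_edgeSet, SimpleGraph.compl_adj _ _ _] at this
    exact this.2 h
  have hat : ∀ (k : ℕ) (hk : k < L.length), k ≤ (i : ℕ) →
      ci (L.get ⟨k, hk⟩) = cs.get ⟨k, by omega⟩ := by
    intro k hk hki
    refine foldl_update_mem _ _ ?_ ?_
    · exact zip_pair_mem_take L cs k _ hk (by omega) (by omega)
    · rw [hkeys]
      exact hLnd.sublist (List.take_sublist _ _)
  have hG2G : ∀ {a b : Fin n}, G.Adj a b → G2.Adj a b := fun h =>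
    (SimpleGraph.sup_adj _ _ _ _).2 (Or.inl h)
  have hG2add : ∀ (k : ℕ) (hk : k < L.length), k ≤ (i : ℕ) → ∀ p q : Fin n,
      L.get ⟨k, hk⟩ = s(p, q) → p ≠ q → G2.Adj p q := by
    intro k hk hki p q hget hne
    refine (SimpleGraph.sup_adj _ _ _ _).2 (Or.inr ?_)
    rw [SimpleGraph.fromEdgeSet_adj]
    refine ⟨?_, hne⟩
    have := list_get_mem_take L k ((i : ℕ) + 1) hk (by omega)
    rw [hget] at this
    exact this
  have hKadj : ∀ p ∈ K, ∀ q ∈ K, p ≠ q → G2.Adj p q := fun p hp q hq hne =>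
    hG2G (conG_core_adj ((hKmem p).1 hp) ((hKmem q).1 hq) hne)
  have hKcol : ∀ p ∈ K, ∀ q ∈ K, p ≠ q → ci s(p, q) = c s(p, q) := fun p hp q hq hne =>
    hGcol p q (conG_core_adj ((hKmem p).1 hp) ((hKmem q).1 hq) hne)
  -- decompose the current edge
  obtain ⟨p, q, hpq⟩ : ∃ p q : Fin n, L.get i = s(p, q) :=
    Sym2.ind (fun a b => ⟨a, b, rfl⟩) (L.get i)
  have heC : L.get i ∈ Gᶜ.edgeSet := (hLmem _).1 (List.get_mem _ _)
  have hpqC : Gᶜ.Adj p q := by rwa [hpq, SimpleGraph.mem_edgeSet] at heC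
  have hne : p ≠ q := hpqC.ne
  have hnadj : ¬G.Adj p q := ((SimpleGraph.compl_adj _ _ _).1 hpqC).2
  have hγdef : ci (L.get i) = cs.get ⟨(i : ℕ), by omega⟩ := by
    have := hat (i : ℕ) i.isLt (le_refl _)
    rwa [show (⟨(i : ℕ), i.isLt⟩ : Fin L.length) = i from Fin.ext rfl] at this
  set γ : ℕ := cs.get ⟨(i : ℕ), by omega⟩ with hγ
  obtain ⟨v0, hv0⟩ : ∃ v0 : Fin n, v0.val = 0 := ⟨⟨0, by omega⟩, rfl⟩
  obtain ⟨v1, hv1⟩ : ∃ v1 : Fin n, v1.val = 1 := ⟨⟨1, by omega⟩, rfl⟩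
  -- the main phase-1 argument
  have hmain1 : ∀ z j : Fin n, L.get i = s(z, j) → N ≤ z.val → j.val < N → ¬G.Adj z j →
      IsRainbowCopyThrough H G2 ci (L.get i) := by
    intro z j hget hzN hjN hzjnadj
    have hzj : z ≠ j := fun h => by rw [h] at hzN; omega
    have hj0 : j.val ≠ 0 := fun h => hzjnadj (conG_anch0 (by omega) hzN h)
    have hlone1 : RWlone n N z.val → j.val ≠ 1 := fun hl h =>
      hzjnadj (conG_anch1 (by omega) hl h)
    have hgamma : ci s(z, j) = γ := by rw [← hget, hγdef]
    -- generic "emb1" with a parameter η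
    have emb1 : ∀ ηv : Fin n, ηv.val < N → G.Adj z ηv → ηv ≠ j → γ ≠ c s(z, ηv) →
        IsRainbowCopyThrough H G2 ci (L.get i) := by
      intro ηv hηN hzη hηj hγη
      -- pick ξ
      obtain ⟨ξ, hξ⟩ : ((K \ ({j, ηv} : Finset (Fin n))) \ colorVerts c γ).Nonempty := by
        rw [← Finset.card_pos]
        have h1 := Finset.le_card_sdiff (colorVerts c γ) (K \ ({j, ηv} : Finset (Fin n)))
        have h2 := Finset.le_card_sdiff ({j, ηv} : Finset (Fin n)) K
        have h3 : ({j, ηv} : Finset (Fin n)).card ≤ 2 := (card_insert_le _ _).trans (by simp)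
        have h4 := colorVerts_card c γ
        omega
      rw [Finset.mem_sdiff, Finset.mem_sdiff, Finset.mem_insert, Finset.mem_singleton] at hξ
      obtain ⟨⟨hξK, hξne⟩, hξCV⟩ := hξ
      push_neg at hξne
      have hξN : ξ.val < N := (hKmem _).1 hξK
      have hzξ : z ≠ ξ := fun h => by rw [h] at hzN; omega
      have hjz : j ≠ z := hzj.symm
      refine exists_rainbow_embed H huv hxu hvy hNu hNv hxv hyu hxyne hnxv hnuy hnxy
        G2 ci c hc K hKcard hKadj hKcol (α := j) (β := z) (ξ := ξ) (η := ηv)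
        hjz hξne.1.symm hηj.symm hzξ (fun h => by rw [h] at hzN; omega) hξne.2
        hξK ((hKmem _).2 hηN) ?_ (hKadj j ((hKmem _).2 hjN) ξ hξK hξne.1.symm)
        (hG2G hzη) ?_ ?_ ?_ ?_
      · -- G2.Adj j z
        exact (hG2add (i : ℕ) i.isLt (le_refl _) z j
          (by rw [show (⟨(i : ℕ), i.isLt⟩ : Fin L.length) = i from Fin.ext rfl]; exact hget)
          hzj).symm
      · -- h12 : ci s(j,z) ≠ ci s(j,ξ)
        have h1 : ci s(j, z) = γ := by rw [Sym2.eq_swap (a := j) (b := z)]; exact hgamma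
        rw [h1, hKcol j ((hKmem _).2 hjN) ξ hξK hξne.1.symm]
        intro h
        exact hξCV (mem_colorVerts hc h.symm).2
      · -- h13 : ci s(j,z) ≠ ci s(z,ηv)
        have h1 : ci s(j, z) = γ := by rw [Sym2.eq_swap (a := j) (b := z)]; exact hgamma
        rw [h1, hGcol z ηv hzη]
        exact hγη
      · -- h23 : ci s(j,ξ) ≠ ci s(z,ηv)
        rw [hKcol j ((hKmem _).2 hjN) ξ hξK hξne.1.symm, hGcol z ηv hzη]
        intro h
        rcases Sym2.eq_iff.1 (hc h) with ⟨h1, h2⟩ | ⟨h1, h2⟩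
        · rw [← h1] at hzN; omega
        · rw [← h2] at hzN; omega
      · -- e = s(j, z) or ...
        left
        rw [hget]; exact Sym2.eq_swap
    -- case analysis
    by_cases hbr : γ = c s(z, v0)
    · by_cases hl : RWlone n N z.val
      · -- lone vertex: use η = vertex 1
        refine emb1 v1 (by omega) (conG_anch1 (by omega) hl hv1)
          (fun h => hlone1 hl (h ▸ hv1)) ?_
        rw [hbr]
        intro h
        rcases Sym2.eq_iff.1 (hc h) with ⟨h1, h2⟩ | ⟨h1, h2⟩
        · have := congrArg Fin.val h2; omega
        · have := congrArg Fin.val h1; omega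
      · -- paired vertex: use "emb2" with the partner
        obtain ⟨b, hbN, hbp⟩ := partner_exists (by omega) hzN hl
        have hzb : z ≠ b := fun h => prel_ne hbp (congrArg Fin.val h)
        have hzv0 : z ≠ v0 := fun h => by have := congrArg Fin.val h; omega
        have hbv0 : b ≠ v0 := fun h => by have := congrArg Fin.val h; omega
        have hjv0 : j ≠ v0 := fun h => by have := congrArg Fin.val h; omega
        have hbj : b ≠ j := fun h => by have := congrArg Fin.val h; omega
        have hAzb : G2.Adj z b := hG2G (conG_prel_adj hbp)
        have hAbv0 : G2.Adj b v0 := hG2G (conG_anch0 (by omega) hbN hv0)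
        refine exists_rainbow_embed H huv hxu hvy hNu hNv hxv hyu hxyne hnxv hnuy hnxy
          G2 ci c hc K hKcard hKadj hKcol (α := z) (β := b) (ξ := j) (η := v0)
          hzb hzj hzv0 hbj hbv0 hjv0 ((hKmem _).2 hjN) ((hKmem _).2 (by omega))
          hAzb ?_ hAbv0 ?_ ?_ ?_ ?_
        · -- G2.Adj z j
          exact hG2add (i : ℕ) i.isLt (le_refl _) z j
            (by rw [show (⟨(i : ℕ), i.isLt⟩ : Fin L.length) = i from Fin.ext rfl]; exact hget)
            hzj
        · -- h12 : ci s(z,b) ≠ ci s(z,j)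
          rw [hGcol z b (conG_prel_adj hbp), hgamma, hbr]
          intro h
          rcases Sym2.eq_iff.1 (hc h) with ⟨h1, h2⟩ | ⟨h1, h2⟩
          · exact hbv0 h2
          · exact hzv0 h1
        · -- h13 : ci s(z,b) ≠ ci s(b, 0)
          rw [hGcol z b (conG_prel_adj hbp), hGcol b _ (conG_anch0 (by omega) hbN hv0)]
          intro h
          rcases Sym2.eq_iff.1 (hc h) with ⟨h1, h2⟩ | ⟨h1, h2⟩
          · exact hzb h1
          · exact hzv0 h1
        · -- h23 : ci s(z,j) ≠ ci s(b, 0)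
          rw [hgamma, hbr, hGcol b _ (conG_anch0 (by omega) hbN hv0)]
          intro h
          rcases Sym2.eq_iff.1 (hc h) with ⟨h1, h2⟩ | ⟨h1, h2⟩
          · exact hzb h1
          · exact hbv0 h2.symm
        · -- e = s(ξ, α) = s(j, z)
          right
          rw [hget]; exact Sym2.eq_swap
    · -- γ ≠ c s(z, 0): emb1 with η = vertex 0
      exact emb1 v0 (by omega) (conG_anch0 (by omega) hzN hv0)
        (fun h => hj0 (h ▸ hv0)) hbr
  by_cases hph : p.val < N ∨ q.val < N
  · -- phase 1
    rcases hph with hp | hq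
    · have hqN : N ≤ q.val := by
        by_contra h
        exact hnadj (conG_core_adj hp (by omega) hne)
      exact hmain1 q p (hpq.trans Sym2.eq_swap) hqN hp
        (fun h => hnadj h.symm)
    · have hpN : N ≤ p.val := by
        by_contra h
        exact hnadj (conG_core_adj (by omega) hq hne)
      exact hmain1 p q hpq hpN hq hnadj
  · -- phase 2
    push_neg at hph
    obtain ⟨hpN, hqN⟩ := hph
    -- all phase-1 edges were added before
    have htake : L.take P1.toList.length = P1.toList := by
      rw [hL]; exact List.take_left
    have hi_ge : P1.toList.length ≤ (i : ℕ) := by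
      by_contra h
      push_neg at h
      have h2 : L.get i ∈ L.take P1.toList.length := by
        have := list_get_mem_take L (i : ℕ) P1.toList.length i.isLt h
        rwa [show (⟨(i : ℕ), i.isLt⟩ : Fin L.length) = i from Fin.ext rfl] at this
      rw [htake, Finset.mem_toList, hP1, mem_filter] at h2
      obtain ⟨-, r, hr, hrN⟩ := h2
      rw [hpq, Sym2.mem_iff] at hr
      rcases hr with rfl | rfl <;> omega
    have hP1idx : ∀ e' ∈ P1, ∃ (k : ℕ) (hk : k < L.length), k ≤ (i : ℕ) ∧ L.get ⟨k, hk⟩ = e' := by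
      intro e' he'
      have hm : e' ∈ L.take P1.toList.length := by
        rw [htake, Finset.mem_toList]; exact he'
      rw [List.mem_iff_get] at hm
      obtain ⟨k, hk⟩ := hm
      have hlt := k.isLt
      have hlen2 : (L.take P1.toList.length).length = min P1.toList.length L.length :=
        List.length_take
      have hkm : k.val < P1.toList.length := by omega
      have hkL : k.val < L.length := by omega
      refine ⟨k.val, hkL, by omega, ?_⟩
      have h4 : (L.take P1.toList.length).get ⟨k.val, k.isLt⟩ = e' := hk
      exact (take_get_eq L P1.toList.length k.val k.isLt).symm.trans h4
    obtain ⟨v2, hv2⟩ : ∃ v2 : Fin n, v2.val = 2 := ⟨⟨2, by omega⟩, rfl⟩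
    obtain ⟨v3, hv3⟩ : ∃ v3 : Fin n, v3.val = 3 := ⟨⟨3, by omega⟩, rfl⟩
    have hadd_mem : ∀ z : Fin n, ∀ w : Fin n, N ≤ z.val → 2 ≤ w.val → w.val < N →
        s(z, w) ∈ P1 := by
      intro z w hz hw2 hwN
      rw [hP1, mem_filter, SimpleGraph.mem_edgeFinset, SimpleGraph.mem_edgeSet,
        SimpleGraph.compl_adj _ _ _]
      refine ⟨⟨fun h => by rw [h] at hz; omega, not_adj_out_core hz hw2 hwN⟩, w, ?_, hwN⟩
      rw [Sym2.mem_iff]; right; rfl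
    obtain ⟨k2, hk2, hk2i, hk2get⟩ := hP1idx s(p, v2)
      (hadd_mem p v2 hpN (by omega) (by omega))
    obtain ⟨k3, hk3, hk3i, hk3get⟩ := hP1idx s(q, v3)
      (hadd_mem q v3 hqN (by omega) (by omega))
    have hpv2 : p ≠ v2 := fun h => by rw [h] at hpN; omega
    have hqv3 : q ≠ v3 := fun h => by rw [h] at hqN; omega
    have hpv3 : p ≠ v3 := fun h => by rw [h] at hpN; omega
    have hqv2 : q ≠ v2 := fun h => by rw [h] at hqN; omega
    have hv23 : v2 ≠ v3 := fun h => by have := congrArg Fin.val h; omega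
    -- distinct indices
    have hk2ne : k2 ≠ (i : ℕ) := by
      intro h
      have : L.get ⟨k2, hk2⟩ = L.get i := congrArg L.get (Fin.ext h)
      rw [hk2get, hpq] at this
      rcases Sym2.eq_iff.1 this with ⟨h1, h2⟩ | ⟨h1, h2⟩
      · exact hqv2 h2.symm
      · exact hpv2 h2.symm
    have hk3ne : k3 ≠ (i : ℕ) := by
      intro h
      have : L.get ⟨k3, hk3⟩ = L.get i := congrArg L.get (Fin.ext h)
      rw [hk3get, hpq] at this
      rcases Sym2.eq_iff.1 this with ⟨h1, h2⟩ | ⟨h1, h2⟩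
      · exact hqv3 h2.symm
      · exact hpv3 h2.symm
    have hk23 : k2 ≠ k3 := by
      intro h
      have : L.get ⟨k2, hk2⟩ = L.get ⟨k3, hk3⟩ := congrArg L.get (Fin.ext h)
      rw [hk2get, hk3get] at this
      rcases Sym2.eq_iff.1 this with ⟨h1, h2⟩ | ⟨h1, h2⟩
      · exact hv23 h2
      · exact hpv3 h1
    have hcsne : ∀ (k k' : ℕ) (hk : k < cs.length) (hk' : k' < cs.length), k ≠ k' →
        cs.get ⟨k, hk⟩ ≠ cs.get ⟨k', hk'⟩ := by
      intro k k' hk hk' hkk h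
      exact hkk (congrArg Fin.val (hcs.get_inj_iff.1 h))
    have hcol2 := hat k2 hk2 hk2i
    rw [hk2get] at hcol2
    have hcol3 := hat k3 hk3 hk3i
    rw [hk3get] at hcol3
    have hgamma : ci s(p, q) = γ := by rw [← hpq, hγdef]
    refine exists_rainbow_embed H huv hxu hvy hNu hNv hxv hyu hxyne hnxv hnuy hnxy
      G2 ci c hc K hKcard hKadj hKcol (α := p) (β := q) (ξ := v2) (η := v3)
      hne hpv2 hpv3 hqv2 hqv3 hv23
      ((hKmem _).2 (by omega)) ((hKmem _).2 (by omega))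
      ?_ ?_ ?_ ?_ ?_ ?_ ?_
    · exact hG2add (i : ℕ) i.isLt (le_refl _) p q
        (by rw [show (⟨(i : ℕ), i.isLt⟩ : Fin L.length) = i from Fin.ext rfl]; exact hpq) hne
    · exact hG2add k2 hk2 hk2i p v2 hk2get hpv2
    · exact hG2add k3 hk3 hk3i q v3 hk3get hqv3
    · rw [hgamma, hcol2]
      exact hcsne _ _ _ _ (fun h => hk2ne h.symm)
    · rw [hgamma, hcol3]
      exact hcsne _ _ _ _ (fun h => hk3ne h.symm)
    · rw [hcol2, hcol3]
      exact hcsne _ _ _ _ hk23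
    · left; exact hpq

end Sat

/-- If `δ'(H) = 2` and `H` contains an edge `uv` with `d_H(u) = d_H(v) = 2` which
is the middle edge of an induced path on four vertices `x, u, v, y`, then there is
a constant `c_H` with `rwsat(n, H) ≤ (3/2)·n + c_H` for every positive `n`. -/
theorem rwsat_le_three_halves {W : Type*} [Fintype W] (H : SimpleGraph W)
    (hδ : minPosDeg H = 2)
    (hP : ∃ u v x y : W, H.Adj u v ∧
      (H.neighborSet u).ncard = 2 ∧ (H.neighborSet v).ncard = 2 ∧
      x ≠ y ∧ x ≠ v ∧ y ≠ u ∧ H.Adj x u ∧ H.Adj v y ∧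
      ¬ H.Adj x v ∧ ¬ H.Adj u y ∧ ¬ H.Adj x y) :
    ∃ cH : ℝ, ∀ n : ℕ, 0 < n → (rwsat H n : ℝ) ≤ 3 / 2 * n + cH := by
  classical
  obtain ⟨u, v, x, y, huv, hdu, hdv, hxyne, hxv, hyu, hxu, hvy, hnxv, hnuy, hnxy⟩ := hP
  have hnbr : ∀ (a b b' : W), H.Adj a b → H.Adj a b' → b ≠ b' →
      (H.neighborSet a).ncard = 2 → ∀ w, H.Adj a w → w = b ∨ w = b' := by
    intro a b b' hb hb' hbb' hcard w hw
    have hsub : ({b, b'} : Set W) ⊆ H.neighborSet a := by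
      intro z hz
      rcases hz with rfl | hz
      · exact hb
      · rw [Set.mem_singleton_iff] at hz
        subst hz
        exact hb'
    have hset : ({b, b'} : Set W) = H.neighborSet a := by
      apply Set.eq_of_subset_of_ncard_le hsub _ (Set.toFinite _)
      rw [hcard, Set.ncard_pair hbb']
    have : w ∈ H.neighborSet a := hw
    rw [← hset] at this
    rcases this with rfl | hz
    · exact Or.inl rfl
    · rw [Set.mem_singleton_iff] at hz
      exact Or.inr hz
  have hNu : ∀ w, H.Adj u w → w = x ∨ w = v :=
    hnbr u x v hxu.symm huv hxv hdu
  have hNv : ∀ w, H.Adj v w → w = u ∨ w = y :=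
    hnbr v u y huv.symm hvy hyu.symm hdv
  set N : ℕ := Fintype.card W + 10 with hN
  refine ⟨(N : ℝ) * N, ?_⟩
  intro n hn
  by_cases hnN : n < N
  · -- small n: use the `n.choose 2` default
    have hle : rwsat H n ≤ n.choose 2 := Nat.sInf_le (Set.mem_union_right _ rfl)
    have hch : n.choose 2 ≤ N * N := by
      have h1 : n.choose 2 ≤ n * (n - 1) := by
        rw [Nat.choose_two_right]
        exact Nat.div_le_self _ _
      have h2 : n * (n - 1) ≤ N * N := Nat.mul_le_mul (by omega) (by omega)
      omega
    have : (rwsat H n : ℝ) ≤ (N : ℝ) * N := by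
      have := hle.trans hch
      calc (rwsat H n : ℝ) ≤ ((N * N : ℕ) : ℝ) := by exact_mod_cast this
        _ = (N : ℝ) * N := by push_cast; ring
    have hpos : (0 : ℝ) ≤ 3 / 2 * n := by positivity
    linarith
  · push_neg at hnN
    set c : Sym2 (Fin n) → ℕ := fun e => ((Fintype.equivFin (Sym2 (Fin n))) e).val with hcdef
    have hc : Function.Injective c :=
      fun a b h => (Fintype.equivFin (Sym2 (Fin n))).injective (Fin.ext h)
    have hsat : WeaklyRainbowSat H (conG n N) c :=
      conG_sat H huv hxu hvy hNu hNv hxv hyu hxyne hnxv hnuy hnxy hN hnN c hc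
    have hmem : (conG n N).edgeSet.ncard ∈
        ({m | ∃ (G : SimpleGraph (Fin n)) (c : Sym2 (Fin n) → ℕ),
          WeaklyRainbowSat H G c ∧ G.edgeSet.ncard = m} ∪ {n.choose 2}) :=
      Set.mem_union_left _ ⟨conG n N, c, hsat, rfl⟩
    have hle : rwsat H n ≤ (conG n N).edgeSet.ncard := Nat.sInf_le hmem
    have hcnt : 2 * (conG n N).edgeSet.ncard ≤ 3 * n + 2 * (N * N) :=
      conG_edge_bound (by omega) hnN
    have h1 : (rwsat H n : ℝ) ≤ ((conG n N).edgeSet.ncard : ℝ) := by exact_mod_cast hle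
    have h2 : 2 * ((conG n N).edgeSet.ncard : ℝ) ≤ 3 * n + 2 * ((N : ℝ) * N) := by
      exact_mod_cast hcnt
    linarith
end

section
/- For every integer t ≥ 3, let H be the graph obtained from the disjoint union of two copies of K_t by adding a single edge between the two copies. Then there exists a constant C_t such that rwsat(n, H) ≤ (t/2)·n + C_t for all sufficiently large n; in particular, writing n = ⌊n/(t+1)⌋(t+1) + r with 0 ≤ r ≤ t, a rainbow edge-colored copy of the disjoint union of r copies of K_{t+2} and ⌊n/(t+1)⌋ − r copies of K_{t+1} is weakly H-rainbow saturated (for sufficiently large n). -/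
open SimpleGraph

/-- The block index of a vertex of `Fin n` partitioned into `n % (t+1)` blocks of
size `t + 2` followed by blocks of size `t + 1`. -/
def blockIdx (t n : ℕ) (i : Fin n) : ℕ :=
  if (i : ℕ) < n % (t + 1) * (t + 2) then (i : ℕ) / (t + 2)
  else n % (t + 1) + ((i : ℕ) - n % (t + 1) * (t + 2)) / (t + 1)

/-- The disjoint union, on `n` vertices, of `r := n % (t+1)` copies of `K_{t+2}`
and `⌊n/(t+1)⌋ - r` copies of `K_{t+1}`: two vertices are adjacent iff they are
distinct and lie in the same block. -/
def blockCliques (t n : ℕ) : SimpleGraph (Fin n) :=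
  SimpleGraph.fromRel (fun i j => blockIdx t n i = blockIdx t n j)


section Helpers

lemma div_decomp' (a b : ℕ) : a = (a / b) * b + a % b := by
  have h1 := Nat.div_add_mod a b
  have h2 : b * (a / b) = (a / b) * b := by ring
  omega

lemma div_eq_of'' {a b q : ℕ} (h1 : q * b ≤ a) (h2 : a < q * b + b) : a / b = q := by
  refine Nat.div_eq_of_lt_le h1 ?_
  have : (q + 1) * b = q * b + b := by ring
  omega

lemma foldl_update_of_ne {V : Type*} [DecidableEq V]
    (l : List (Sym2 V × ℕ)) (c : Sym2 V → ℕ) (f : Sym2 V)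
    (h : ∀ p ∈ l, p.1 ≠ f) :
    l.foldl (fun c' p => Function.update c' p.1 p.2) c f = c f := by
  induction l generalizing c with
  | nil => rfl
  | cons p l ih =>
      simp only [List.foldl_cons]
      rw [ih _ (fun q hq => h q (List.mem_cons_of_mem _ hq)),
        Function.update_of_ne (Ne.symm (h p List.mem_cons_self))]

lemma blockIdx_fiber (t n : ℕ) (hn : (t+1)*(t+1) ≤ n) (v : Fin n) :
    ∃ s sz, s ≤ (v:ℕ) ∧ (v:ℕ) < s + sz ∧ t+1 ≤ sz ∧ sz ≤ t+2 ∧ s + sz ≤ n ∧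
      ((v:ℕ) < n % (t+1) * (t+2) ∨ sz = t+1) ∧
      ∀ j : Fin n, blockIdx t n j = blockIdx t n v ↔ (s ≤ (j:ℕ) ∧ (j:ℕ) < s + sz) := by
  obtain ⟨r, hrdef⟩ : ∃ r, n % (t+1) = r := ⟨_, rfl⟩
  have hr : r < t + 1 := hrdef ▸ Nat.mod_lt _ (by omega)
  have hq : t + 1 ≤ n / (t+1) := Nat.le_div_iff_mul_le (by omega) |>.2 (by omega)
  obtain ⟨k, hk⟩ : ∃ k, n / (t+1) = r + k := ⟨n/(t+1) - r, by omega⟩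
  have h0 : n = (r + k) * (t+1) + r := by
    have := div_decomp' n (t+1); rw [hk, hrdef] at this; omega
  have hkey : n = r * (t+2) + k * (t+1) := by
    have : (r + k) * (t+1) + r = r * (t+2) + k * (t+1) := by ring
    omega
  have hk1 : 1 ≤ k := by omega
  have hRn : r * (t+2) ≤ n := by omega
  have hhi : ∀ j : Fin n, ¬ ((j:ℕ) < r * (t+2)) →
      blockIdx t n j = r + ((j:ℕ) - r*(t+2))/(t+1) := by
    intro j hj; simp only [blockIdx, hrdef, if_neg hj]
  have hlo : ∀ j : Fin n, (j:ℕ) < r * (t+2) → blockIdx t n j = (j:ℕ)/(t+2) := by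
    intro j hj; simp only [blockIdx, hrdef, if_pos hj]
  by_cases hv : (v:ℕ) < r * (t+2)
  · obtain ⟨b, hb⟩ : ∃ b, (v:ℕ) / (t+2) = b := ⟨_, rfl⟩
    have hvd := div_decomp' (v:ℕ) (t+2)
    have hvm := Nat.mod_lt (v:ℕ) (show 0 < t+2 by omega)
    rw [hb] at hvd
    have hbr : b < r := by
      by_contra hcon
      have : r * (t+2) ≤ b * (t+2) := Nat.mul_le_mul_right _ (by omega)
      omega
    have hb1 : (b+1) * (t+2) ≤ r * (t+2) := Nat.mul_le_mul_right _ (by omega)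
    have hb2 : (b+1) * (t+2) = b * (t+2) + (t+2) := by ring
    refine ⟨b*(t+2), t+2, by omega, by omega, by omega, le_refl _, by omega,
      Or.inl (hrdef ▸ hv), ?_⟩
    intro j
    rw [hlo v hv, hb]
    constructor
    · intro hj
      have hjlo : (j:ℕ) < r * (t+2) := by
        by_contra hcon
        rw [hhi j hcon] at hj
        obtain ⟨D, hD⟩ : ∃ D, ((j:ℕ) - r*(t+2))/(t+1) = D := ⟨_, rfl⟩
        rw [hD] at hj; omega
      rw [hlo j hjlo] at hj
      have hjd := div_decomp' (j:ℕ) (t+2)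
      have hjm := Nat.mod_lt (j:ℕ) (show 0 < t+2 by omega)
      rw [hj] at hjd
      omega
    · intro ⟨h1, h2⟩
      have hjlo : (j:ℕ) < r * (t+2) := by omega
      rw [hlo j hjlo]
      exact div_eq_of'' h1 (by omega)
  · obtain ⟨m, hm⟩ : ∃ m, ((v:ℕ) - r*(t+2))/(t+1) = m := ⟨_, rfl⟩
    have hvd := div_decomp' ((v:ℕ) - r*(t+2)) (t+1)
    have hvm := Nat.mod_lt ((v:ℕ) - r*(t+2)) (show 0 < t+1 by omega)
    rw [hm] at hvd
    have hvn := v.2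
    have hmk : m < k := by
      by_contra hcon
      have : k * (t+1) ≤ m * (t+1) := Nat.mul_le_mul_right _ (by omega)
      omega
    have hm1 : (m+1) * (t+1) ≤ k * (t+1) := Nat.mul_le_mul_right _ (by omega)
    have hm2 : (m+1) * (t+1) = m * (t+1) + (t+1) := by ring
    refine ⟨r*(t+2) + m*(t+1), t+1, by omega, by omega, le_refl _, by omega, by omega,
      Or.inr rfl, ?_⟩
    intro j
    rw [hhi v hv, hm]
    constructor
    · intro hj
      have hjhi : ¬ ((j:ℕ) < r * (t+2)) := by
        intro hcon
        rw [hlo j hcon] at hj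
        have hjd := div_decomp' (j:ℕ) (t+2)
        rw [hj] at hjd
        have : r * (t+2) ≤ (r + m) * (t+2) := Nat.mul_le_mul_right _ (by omega)
        omega
      rw [hhi j hjhi] at hj
      have hdj : ((j:ℕ) - r*(t+2))/(t+1) = m := by omega
      have hjd := div_decomp' ((j:ℕ) - r*(t+2)) (t+1)
      have hjm := Nat.mod_lt ((j:ℕ) - r*(t+2)) (show 0 < t+1 by omega)
      rw [hdj] at hjd
      omega
    · intro ⟨h1, h2⟩
      have hjhi : ¬ ((j:ℕ) < r * (t+2)) := by omega
      rw [hhi j hjhi]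
      have : ((j:ℕ) - r*(t+2))/(t+1) = m := div_eq_of'' (by omega) (by omega)
      omega

lemma fiber_finset (t n : ℕ) (hn : (t+1)*(t+1) ≤ n) (v : Fin n) :
    ∃ sz, t+1 ≤ sz ∧ sz ≤ t+2 ∧ ((v:ℕ) < n % (t+1)*(t+2) ∨ sz = t+1) ∧
      (Finset.univ.filter fun j => blockIdx t n j = blockIdx t n v).card = sz := by
  obtain ⟨s, sz, h1, h2, h3, h4, h5, h6, h7⟩ := blockIdx_fiber t n hn v
  refine ⟨sz, h3, h4, h6, ?_⟩
  have himg : (Finset.univ.filter fun j => blockIdx t n j = blockIdx t n v).image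
      (Fin.val) = Finset.Ico s (s+sz) := by
    ext x
    simp only [Finset.mem_image, Finset.mem_filter, Finset.mem_univ, true_and,
      Finset.mem_Ico]
    constructor
    · rintro ⟨j, hj, rfl⟩; exact (h7 j).1 hj
    · rintro ⟨ha, hb⟩
      exact ⟨⟨x, by omega⟩, (h7 ⟨x, by omega⟩).2 ⟨ha, hb⟩, rfl⟩
  have hcard := Finset.card_image_of_injective
    (Finset.univ.filter fun j => blockIdx t n j = blockIdx t n v) (Fin.val_injective)
  rw [himg, Nat.card_Ico] at hcard
  omega

lemma blockCliques_adj (t n : ℕ) (a b : Fin n) :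
    (blockCliques t n).Adj a b ↔ a ≠ b ∧ blockIdx t n a = blockIdx t n b := by
  rw [blockCliques, SimpleGraph.fromRel_adj]
  constructor
  · rintro ⟨h1, h2 | h2⟩
    exacts [⟨h1, h2⟩, ⟨h1, h2.symm⟩]
  · rintro ⟨h1, h2⟩
    exact ⟨h1, Or.inl h2⟩

end Helpers

/-- For `t ≥ 3`, let `H` be two disjoint copies of `K_t` joined by a single edge.
Then there is a constant `C_t` such that `rwsat(n, H) ≤ (t/2)·n + C_t` for all
sufficiently large `n`; in particular, writing `n = ⌊n/(t+1)⌋(t+1) + r` with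
`0 ≤ r ≤ t`, a rainbow copy of `r·K_{t+2} ∪ (⌊n/(t+1)⌋ - r)·K_{t+1}` is weakly
`H`-rainbow saturated for sufficiently large `n`. -/
theorem rwsat_two_cliques (t : ℕ) (ht : 3 ≤ t)
    (H : SimpleGraph (Fin t ⊕ Fin t))
    (hHdef : H = SimpleGraph.fromRel (fun x y =>
      (x.isLeft ∧ y.isLeft) ∨ (x.isRight ∧ y.isRight) ∨
      (x = Sum.inl ⟨0, by omega⟩ ∧ y = Sum.inr ⟨0, by omega⟩))) :
    ∃ (Ct : ℝ) (N : ℕ), ∀ n : ℕ, N ≤ n →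
      (rwsat H n : ℝ) ≤ (t : ℝ) / 2 * n + Ct ∧
      ∀ c : Sym2 (Fin n) → ℕ, RainbowOn c (blockCliques t n).edgeSet →
        WeaklyRainbowSat H (blockCliques t n) c := by
  classical
  -- the distinguished vertex of each `K_t`
  set z0 : Fin t := ⟨0, by omega⟩ with hz0
  have hH : ∀ a b : Fin t ⊕ Fin t, H.Adj a b ↔ a ≠ b ∧
      (((a.isLeft ∧ b.isLeft) ∨ (a.isRight ∧ b.isRight) ∨
        (a = Sum.inl z0 ∧ b = Sum.inr z0)) ∨
       ((b.isLeft ∧ a.isLeft) ∨ (b.isRight ∧ a.isRight) ∨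
        (b = Sum.inl z0 ∧ a = Sum.inr z0))) := by
    intro a b
    rw [hHdef, SimpleGraph.fromRel_adj]
  have hHll : ∀ x y : Fin t, x ≠ y → H.Adj (Sum.inl x) (Sum.inl y) := by
    intro x y hxy
    rw [hH]
    refine ⟨by simpa using hxy, Or.inl (Or.inl ⟨by simp, by simp⟩)⟩
  have hHrr : ∀ x y : Fin t, x ≠ y → H.Adj (Sum.inr x) (Sum.inr y) := by
    intro x y hxy
    rw [hH]
    refine ⟨by simpa using hxy, Or.inl (Or.inr (Or.inl ⟨by simp, by simp⟩))⟩
  have hHlr : H.Adj (Sum.inl z0) (Sum.inr z0) := by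
    rw [hH]
    exact ⟨by simp, Or.inl (Or.inr (Or.inr ⟨rfl, rfl⟩))⟩
  have hclass : ∀ a b, H.Adj a b →
      (∃ x y : Fin t, x ≠ y ∧ a = Sum.inl x ∧ b = Sum.inl y) ∨
      (∃ x y : Fin t, x ≠ y ∧ a = Sum.inr x ∧ b = Sum.inr y) ∨
      (a = Sum.inl z0 ∧ b = Sum.inr z0) ∨ (a = Sum.inr z0 ∧ b = Sum.inl z0) := by
    intro a b hab
    rw [hH] at hab
    obtain ⟨hne, hr⟩ := hab
    rcases a with x | x <;> rcases b with y | y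
    · exact Or.inl ⟨x, y, by simpa using hne, rfl, rfl⟩
    · right; right; left
      simp only [Sum.isLeft_inl, Sum.isLeft_inr, Sum.isRight_inl, Sum.isRight_inr,
        Sum.inl.injEq, Sum.inr.injEq, reduceCtorEq] at hr
      obtain ⟨h1, h2⟩ : x = z0 ∧ y = z0 := by simpa using hr
      exact ⟨by rw [h1], by rw [h2]⟩
    · right; right; right
      simp only [Sum.isLeft_inl, Sum.isLeft_inr, Sum.isRight_inl, Sum.isRight_inr,
        Sum.inl.injEq, Sum.inr.injEq, reduceCtorEq] at hr
      obtain ⟨h1, h2⟩ : y = z0 ∧ x = z0 := by simpa using hr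
      exact ⟨by rw [h2], by rw [h1]⟩
    · exact Or.inr (Or.inl ⟨x, y, by simpa using hne, rfl, rfl⟩)
  -- the key fact: the block-clique graph is weakly rainbow saturated
  have key : ∀ n : ℕ, (t+1)*(t+1) ≤ n → ∀ c : Sym2 (Fin n) → ℕ,
      RainbowOn c (blockCliques t n).edgeSet →
      WeaklyRainbowSat H (blockCliques t n) c := by
    intro n hn c hc
    set G := blockCliques t n with hG
    have hGadj : ∀ a b : Fin n, G.Adj a b ↔ a ≠ b ∧ blockIdx t n a = blockIdx t n b :=
      blockCliques_adj t n
    have hfin : (Gᶜ.edgeSet).Finite := Set.toFinite _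
    obtain ⟨L, hLnd, hLmem⟩ : ∃ L : List (Sym2 (Fin n)), L.Nodup ∧
        ∀ e, e ∈ L ↔ e ∈ Gᶜ.edgeSet :=
      ⟨hfin.toFinset.toList, Finset.nodup_toList _,
        fun e => by rw [Finset.mem_toList, Set.Finite.mem_toFinset]⟩
    refine ⟨L, hLnd, hLmem, ?_⟩
    intro cs hlen hnd i
    have hilt : (i : ℕ) < L.length := i.isLt
    have hics : (i : ℕ) < cs.length := by omega
    set γ : ℕ := cs.get ⟨(i : ℕ), hics⟩ with hγ
    -- the added edge
    have he : L.get i ∈ Gᶜ.edgeSet := (hLmem _).1 (List.get_mem L i)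
    obtain ⟨⟨u, v⟩, huv0⟩ := Quot.exists_rep (L.get i)
    have huv : L.get i = s(u, v) := huv0.symm
    have hadjc : Gᶜ.Adj u v := by rwa [huv, SimpleGraph.mem_edgeSet] at he
    obtain ⟨hne, hnadj⟩ := (SimpleGraph.compl_adj G u v).1 hadjc
    have hbuv : blockIdx t n u ≠ blockIdx t n v := by
      intro hbe
      exact hnadj ((hGadj u v).2 ⟨hne, hbe⟩)
    have hnotGedge : s(u, v) ∉ G.edgeSet := by
      rw [SimpleGraph.mem_edgeSet]; exact hnadj
    -- a vertex to avoid: it covers every `G`-edge of color `γ`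
    obtain ⟨w, hw⟩ : ∃ w : Fin n, ∀ f ∈ G.edgeSet, c f = γ →
        (w ∈ f ∧ w ≠ u ∧ w ≠ v) := by
      by_cases hex : ∃ f ∈ G.edgeSet, c f = γ
      · obtain ⟨f, hf, hcf⟩ := hex
        obtain ⟨⟨x, y⟩, hxy0⟩ := Quot.exists_rep f
        have hxy : f = s(x, y) := hxy0.symm
        have hadjxy : G.Adj x y := by rwa [hxy, SimpleGraph.mem_edgeSet] at hf
        have hxyne : x ≠ y := hadjxy.ne
        have hfne : f ≠ s(u, v) := fun hcon => hnotGedge (hcon ▸ hf)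
        have huniq : ∀ f' ∈ G.edgeSet, c f' = γ → f' = f :=
          fun f' hf' hcf' => hc f' hf' f hf (hcf'.trans hcf.symm)
        by_cases hx : x = u ∨ x = v
        · -- then y ∉ {u, v}
          have hyu : y ≠ u := by
            rintro rfl
            rcases hx with rfl | rfl
            · exact hxyne rfl
            · exact hfne (by rw [hxy, Sym2.eq_swap])
          have hyv : y ≠ v := by
            rintro rfl
            rcases hx with rfl | rfl
            · exact hfne (by rw [hxy])
            · exact hxyne rfl
          refine ⟨y, fun f' hf' hcf' => ?_⟩
          rw [huniq f' hf' hcf', hxy]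
          exact ⟨by simp [Sym2.mem_iff], hyu, hyv⟩
        · push_neg at hx
          refine ⟨x, fun f' hf' hcf' => ?_⟩
          rw [huniq f' hf' hcf', hxy]
          exact ⟨by simp [Sym2.mem_iff], hx.1, hx.2⟩
      · exact ⟨u, fun f hf hcf => absurd ⟨f, hf, hcf⟩ hex⟩
    -- choose the clique parts
    have hsel : ∀ z : Fin n, ∃ T : Finset (Fin n), T.card = t - 1 ∧
        ∀ x ∈ T, blockIdx t n x = blockIdx t n z ∧ x ≠ z ∧ x ≠ w := by
      intro z
      obtain ⟨sz, hsz1, _, _, hszcard⟩ := fiber_finset t n hn z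
      have hsd := Finset.le_card_sdiff ({z, w} : Finset (Fin n))
        (Finset.univ.filter fun j => blockIdx t n j = blockIdx t n z)
      have hc2 : ({z, w} : Finset (Fin n)).card ≤ 2 :=
        le_trans (Finset.card_insert_le _ _) (by simp)
      have : t - 1 ≤ ((Finset.univ.filter fun j => blockIdx t n j = blockIdx t n z) \
          ({z, w} : Finset (Fin n))).card := by omega
      obtain ⟨T, hTsub, hTcard⟩ := Finset.exists_subset_card_eq this
      refine ⟨T, hTcard, fun x hx => ?_⟩
      have := hTsub hx
      rw [Finset.mem_sdiff, Finset.mem_filter, Finset.mem_insert, Finset.mem_singleton] at this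
      exact ⟨this.1.2, fun h => this.2 (Or.inl h), fun h => this.2 (Or.inr h)⟩
    obtain ⟨TA, hTAcard, hTAprop⟩ := hsel u
    obtain ⟨TB, hTBcard, hTBprop⟩ := hsel v
    obtain ⟨gA, hgAinj, hgAmem⟩ : ∃ gA : Fin (t-1) → Fin n, Function.Injective gA ∧
        ∀ k, gA k ∈ TA := by
      refine ⟨fun k => ((Finset.equivFinOfCardEq hTAcard).symm k : Fin n), ?_,
        fun k => ((Finset.equivFinOfCardEq hTAcard).symm k).2⟩
      intro a b h
      exact (Finset.equivFinOfCardEq hTAcard).symm.injective (Subtype.ext h)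
    obtain ⟨gB, hgBinj, hgBmem⟩ : ∃ gB : Fin (t-1) → Fin n, Function.Injective gB ∧
        ∀ k, gB k ∈ TB := by
      refine ⟨fun k => ((Finset.equivFinOfCardEq hTBcard).symm k : Fin n), ?_,
        fun k => ((Finset.equivFinOfCardEq hTBcard).symm k).2⟩
      intro a b h
      exact (Finset.equivFinOfCardEq hTBcard).symm.injective (Subtype.ext h)
    -- the embedding of `H`
    obtain ⟨φ, hφu, hφv, hφl, hφr, hφinj⟩ :
        ∃ φ : Fin t ⊕ Fin t → Fin n,
          φ (Sum.inl z0) = u ∧ φ (Sum.inr z0) = v ∧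
          (∀ k : Fin t, φ (Sum.inl k) = u ∨ φ (Sum.inl k) ∈ TA) ∧
          (∀ k : Fin t, φ (Sum.inr k) = v ∨ φ (Sum.inr k) ∈ TB) ∧
          Function.Injective φ := by
      refine ⟨fun x => Sum.elim
        (fun k : Fin t => if h : (k : ℕ) = 0 then u else gA ⟨(k : ℕ) - 1, by omega⟩)
        (fun k : Fin t => if h : (k : ℕ) = 0 then v else gB ⟨(k : ℕ) - 1, by omega⟩) x,
        by simp [z0], by simp [z0], ?_, ?_, ?_⟩
      · intro k
        by_cases h : (k : ℕ) = 0
        · simp [h]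
        · simp only [Sum.elim_inl, dif_neg h]
          exact Or.inr (hgAmem _)
      · intro k
        by_cases h : (k : ℕ) = 0
        · simp [h]
        · simp only [Sum.elim_inr, dif_neg h]
          exact Or.inr (hgBmem _)
      · have hAu : ∀ k, gA k ≠ u := fun k => (hTAprop _ (hgAmem k)).2.1
        have hBv : ∀ k, gB k ≠ v := fun k => (hTBprop _ (hgBmem k)).2.1
        have hAblk : ∀ k, blockIdx t n (gA k) = blockIdx t n u :=
          fun k => (hTAprop _ (hgAmem k)).1
        have hBblk : ∀ k, blockIdx t n (gB k) = blockIdx t n v :=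
          fun k => (hTBprop _ (hgBmem k)).1
        have hcross : ∀ a b : Fin n,
            (a = u ∨ blockIdx t n a = blockIdx t n u) →
            (b = v ∨ blockIdx t n b = blockIdx t n v) → a ≠ b := by
          intro a b ha hb hab
          apply hbuv
          have h1 : blockIdx t n a = blockIdx t n u := by
            rcases ha with rfl | h; exacts [rfl, h]
          have h2 : blockIdx t n b = blockIdx t n v := by
            rcases hb with rfl | h; exacts [rfl, h]
          rw [← h1, ← h2, hab]
        intro x y hxy
        rcases x with k | k <;> rcases y with k' | k'
        · simp only [Sum.elim_inl] at hxy
          split_ifs at hxy with h1 h2 h2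
          · exact congrArg Sum.inl (Fin.ext (by omega))
          · exact absurd hxy.symm (hAu _)
          · exact absurd hxy (hAu _)
          · have := hgAinj hxy
            rw [Fin.mk.injEq] at this
            exact congrArg Sum.inl (Fin.ext (by omega))
        · exfalso
          simp only [Sum.elim_inl, Sum.elim_inr] at hxy
          refine hcross _ _ ?_ ?_ hxy
          · split_ifs with h1
            · exact Or.inl rfl
            · exact Or.inr (hAblk _)
          · split_ifs with h1
            · exact Or.inl rfl
            · exact Or.inr (hBblk _)
        · exfalso
          simp only [Sum.elim_inl, Sum.elim_inr] at hxy
          refine hcross _ _ ?_ ?_ hxy.symm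
          · split_ifs with h1
            · exact Or.inl rfl
            · exact Or.inr (hAblk _)
          · split_ifs with h1
            · exact Or.inl rfl
            · exact Or.inr (hBblk _)
        · simp only [Sum.elim_inr] at hxy
          split_ifs at hxy with h1 h2 h2
          · exact congrArg Sum.inr (Fin.ext (by omega))
          · exact absurd hxy.symm (hBv _)
          · exact absurd hxy (hBv _)
          · have := hgBinj hxy
            rw [Fin.mk.injEq] at this
            exact congrArg Sum.inr (Fin.ext (by omega))
    have hblkA : ∀ k : Fin t, blockIdx t n (φ (Sum.inl k)) = blockIdx t n u := by
      intro k
      rcases hφl k with h | h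
      · rw [h]
      · exact (hTAprop _ h).1
    have hblkB : ∀ k : Fin t, blockIdx t n (φ (Sum.inr k)) = blockIdx t n v := by
      intro k
      rcases hφr k with h | h
      · rw [h]
      · exact (hTBprop _ h).1
    -- membership of the added edge in the take-list
    have htake : L.get i ∈ L.take ((i : ℕ) + 1) := by
      rw [List.take_succ]
      refine List.mem_append_right _ ?_
      rw [List.getElem?_eq_getElem hilt]
      simp [List.get_eq_getElem]
    -- the updated coloring
    set c' : Sym2 (Fin n) → ℕ := ((L.zip cs).take ((i : ℕ) + 1)).foldl
      (fun c' p => Function.update c' p.1 p.2) c with hc'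
    have hGedge_notinL : ∀ f ∈ G.edgeSet, f ∉ L := by
      intro f hf hfL
      have hcompl := (hLmem f).1 hfL
      obtain ⟨⟨x, y⟩, hxy0⟩ := Quot.exists_rep f
      rw [← hxy0] at hcompl hf
      have h1 : G.Adj x y := (SimpleGraph.mem_edgeSet _).1 hf
      have h2 : Gᶜ.Adj x y := (SimpleGraph.mem_edgeSet _).1 hcompl
      exact ((SimpleGraph.compl_adj G x y).1 h2).2 h1
    have hc'G : ∀ f ∈ G.edgeSet, c' f = c f := by
      intro f hf
      rw [hc']
      apply foldl_update_of_ne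
      rintro ⟨p1, p2⟩ hp hpf
      have hp1 : p1 ∈ L := (List.of_mem_zip (List.mem_of_mem_take hp)).1
      exact hGedge_notinL f hf (hpf ▸ hp1)
    have hc'e : c' (L.get i) = γ := by
      have hiltz : (i : ℕ) < (L.zip cs).length := by
        rw [List.length_zip]; omega
      have hzl : (L.zip cs).take ((i : ℕ) + 1) = (L.zip cs).take (i : ℕ) ++
          [(L.get i, cs.get ⟨(i : ℕ), hics⟩)] := by
        rw [List.take_succ, List.getElem?_eq_getElem hiltz]
        simp [List.getElem_zip, List.get_eq_getElem]
      rw [hc', hzl, List.foldl_append]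
      simp [Function.update_self, hγ, List.get_eq_getElem]
    -- the combined classification of copy edges
    have claim : ∀ a b, H.Adj a b →
        (s(φ a, φ b) = L.get i ∧ s(a, b) = s(Sum.inl z0, Sum.inr z0)) ∨
        (s(φ a, φ b) ∈ G.edgeSet ∧ c' s(φ a, φ b) = c s(φ a, φ b) ∧
          c s(φ a, φ b) ≠ γ) := by
      intro a b hab
      have hmain : ∀ p q : Fin t ⊕ Fin t, p ≠ q →
          (∀ k : Fin t, ∃ k' : Fin t, p = Sum.inl k' ∨ p = Sum.inr k') →
          blockIdx t n (φ p) = blockIdx t n (φ q) →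
          (φ p = u ∨ φ p ∈ TA ∨ φ p ∈ TB) →
          (φ q = u ∨ φ q ∈ TA ∨ φ q ∈ TB) → True := fun _ _ _ _ _ _ _ => trivial
      rcases hclass a b hab with ⟨x, y, hxy, rfl, rfl⟩ | ⟨x, y, hxy, rfl, rfl⟩ |
        ⟨rfl, rfl⟩ | ⟨rfl, rfl⟩
      · right
        have hadj : G.Adj (φ (Sum.inl x)) (φ (Sum.inl y)) := by
          rw [hGadj]
          exact ⟨fun h => hxy (Sum.inl.inj (hφinj h)), by rw [hblkA, hblkA]⟩
        have hmem : s(φ (Sum.inl x), φ (Sum.inl y)) ∈ G.edgeSet :=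
          (SimpleGraph.mem_edgeSet _).2 hadj
        refine ⟨hmem, hc'G _ hmem, fun hγe => ?_⟩
        obtain ⟨hwin, hwu, _⟩ := hw _ hmem hγe
        rw [Sym2.mem_iff] at hwin
        have hbad : ∀ k : Fin t, w ≠ φ (Sum.inl k) := by
          intro k hk
          rcases hφl k with h | h
          · exact hwu (hk.trans h)
          · exact (hTAprop _ h).2.2 hk.symm
        rcases hwin with h | h
        · exact hbad x h
        · exact hbad y h
      · right
        have hadj : G.Adj (φ (Sum.inr x)) (φ (Sum.inr y)) := by
          rw [hGadj]
          exact ⟨fun h => hxy (Sum.inr.inj (hφinj h)), by rw [hblkB, hblkB]⟩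
        have hmem : s(φ (Sum.inr x), φ (Sum.inr y)) ∈ G.edgeSet :=
          (SimpleGraph.mem_edgeSet _).2 hadj
        refine ⟨hmem, hc'G _ hmem, fun hγe => ?_⟩
        obtain ⟨hwin, _, hwv⟩ := hw _ hmem hγe
        rw [Sym2.mem_iff] at hwin
        have hbad : ∀ k : Fin t, w ≠ φ (Sum.inr k) := by
          intro k hk
          rcases hφr k with h | h
          · exact hwv (hk.trans h)
          · exact (hTBprop _ h).2.2 hk.symm
        rcases hwin with h | h
        · exact hbad x h
        · exact hbad y h
      · left
        refine ⟨?_, rfl⟩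
        rw [hφu, hφv]
        exact huv.symm
      · left
        refine ⟨?_, Sym2.eq_swap⟩
        rw [hφu, hφv, Sym2.eq_swap]
        exact huv.symm
    -- assemble the rainbow copy
    refine ⟨φ, hφinj, ?_, ?_, Sum.inl z0, Sum.inr z0, hHlr, ?_⟩
    · intro a b hab
      rw [SimpleGraph.sup_adj]
      rcases hclass a b hab with ⟨x, y, hxy, rfl, rfl⟩ | ⟨x, y, hxy, rfl, rfl⟩ |
        ⟨rfl, rfl⟩ | ⟨rfl, rfl⟩
      · left
        rw [hGadj]
        exact ⟨fun h => hxy (Sum.inl.inj (hφinj h)), by rw [hblkA, hblkA]⟩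
      · left
        rw [hGadj]
        exact ⟨fun h => hxy (Sum.inr.inj (hφinj h)), by rw [hblkB, hblkB]⟩
      · right
        rw [SimpleGraph.fromEdgeSet_adj, hφu, hφv]
        exact ⟨by rw [← huv]; exact htake, hne⟩
      · right
        rw [SimpleGraph.fromEdgeSet_adj, hφu, hφv]
        refine ⟨?_, hne.symm⟩
        rw [Sym2.eq_swap, ← huv]
        exact htake
    · intro a b a' b' hab hab' heq
      rcases claim a b hab with ⟨h1, h2⟩ | ⟨h1, h2, h3⟩ <;>
        rcases claim a' b' hab' with ⟨h1', h2'⟩ | ⟨h1', h2', h3'⟩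
      · exact h2.trans h2'.symm
      · exfalso
        rw [h1, hc'e, h2'] at heq
        exact h3' heq.symm
      · exfalso
        rw [h1', hc'e, h2] at heq
        exact h3 heq
      · rw [h2, h2'] at heq
        have := hc _ h1 _ h1' heq
        have hmap : Sym2.map φ s(a, b) = Sym2.map φ s(a', b') := by
          rwa [Sym2.map_pair_eq, Sym2.map_pair_eq]
        exact Sym2.map.injective hφinj hmap
    · rw [hφu, hφv]
      exact huv
  -- conclusion
  refine ⟨((t : ℝ) + 1) * ((t : ℝ) + 2) / 2, (t+1)*(t+1), fun n hn => ?_⟩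
  have hkeyn := key n hn
  refine ⟨?_, hkeyn⟩
  -- a rainbow coloring exists
  have hrb : RainbowOn (fun e => ((Fintype.equivFin (Sym2 (Fin n))) e : ℕ))
      (blockCliques t n).edgeSet := by
    intro e1 _ e2 _ h
    exact (Fintype.equivFin _).injective (Fin.val_injective h)
  have hwrs := hkeyn _ hrb
  have hle : rwsat H n ≤ (blockCliques t n).edgeSet.ncard :=
    Nat.sInf_le (Set.mem_union_left _ ⟨_, _, hwrs, rfl⟩)
  -- edge count
  letI instDec : DecidableRel (blockCliques t n).Adj := fun a b =>
    decidable_of_iff _ (blockCliques_adj t n a b).symm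
  have hdeg : ∀ v : Fin n, (blockCliques t n).degree v + 1 ≤
      t + 1 + (if (v : ℕ) < n % (t+1) * (t+2) then 1 else 0) := by
    intro v
    obtain ⟨sz, hsz1, hsz2, hsz3, hszcard⟩ := fiber_finset t n hn v
    have hsub : (blockCliques t n).neighborFinset v ⊆
        (Finset.univ.filter fun j => blockIdx t n j = blockIdx t n v).erase v := by
      intro j hj
      rw [SimpleGraph.mem_neighborFinset, blockCliques_adj] at hj
      rw [Finset.mem_erase, Finset.mem_filter]
      exact ⟨fun h => hj.1 h.symm, Finset.mem_univ _, hj.2.symm⟩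
    have hmemv : v ∈ (Finset.univ.filter fun j => blockIdx t n j = blockIdx t n v) := by
      rw [Finset.mem_filter]; exact ⟨Finset.mem_univ _, rfl⟩
    have hcard := Finset.card_le_card hsub
    rw [Finset.card_erase_of_mem hmemv, hszcard] at hcard
    have hdegv : (blockCliques t n).degree v ≤ sz - 1 := hcard
    split_ifs with hv
    · omega
    · rcases hsz3 with h | h
      · exact absurd h hv
      · omega
  have hsum := SimpleGraph.sum_degrees_eq_twice_card_edges (blockCliques t n)
  have hS : ∑ v : Fin n, (blockCliques t n).degree v ≤
      ∑ v : Fin n, (t + if (v : ℕ) < n % (t+1) * (t+2) then 1 else 0) :=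
    Finset.sum_le_sum fun v _ => by have := hdeg v; omega
  have hsplit : ∑ v : Fin n, (t + if (v : ℕ) < n % (t+1) * (t+2) then 1 else 0)
      = n * t + (Finset.univ.filter fun v : Fin n =>
        (v : ℕ) < n % (t+1) * (t+2)).card := by
    rw [Finset.sum_add_distrib, Finset.sum_const, Finset.card_univ, Fintype.card_fin,
      smul_eq_mul, Finset.card_filter]
  have hflt : (Finset.univ.filter fun v : Fin n =>
      (v : ℕ) < n % (t+1) * (t+2)).card ≤ (t+1) * (t+2) := by
    have hsub2 : ∀ v ∈ (Finset.univ.filter fun v : Fin n =>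
        (v : ℕ) < n % (t+1) * (t+2)), (v : ℕ) ∈ Finset.range ((t+1) * (t+2)) := by
      intro v hv
      rw [Finset.mem_filter] at hv
      rw [Finset.mem_range]
      have h1 : n % (t+1) < t+1 := Nat.mod_lt _ (by omega)
      have h2 : n % (t+1) * (t+2) ≤ (t+1) * (t+2) :=
        Nat.mul_le_mul_right _ (by omega)
      omega
    calc (Finset.univ.filter fun v : Fin n => (v : ℕ) < n % (t+1) * (t+2)).card
        ≤ (Finset.range ((t+1) * (t+2))).card :=
          Finset.card_le_card_of_injOn Fin.val hsub2
            (Fin.val_injective.injOn)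
      _ = (t+1) * (t+2) := Finset.card_range _
  have h2E : 2 * (blockCliques t n).edgeFinset.card ≤ n * t + (t+1) * (t+2) := by
    rw [← hsum]
    omega
  have hnc : (blockCliques t n).edgeSet.ncard = (blockCliques t n).edgeFinset.card := by
    rw [← SimpleGraph.coe_edgeFinset, Set.ncard_coe_finset]
  have h2E' : 2 * (blockCliques t n).edgeSet.ncard ≤ n * t + (t+1) * (t+2) := by
    rw [hnc]; exact h2E
  calc (rwsat H n : ℝ) ≤ ((blockCliques t n).edgeSet.ncard : ℝ) :=
        Nat.cast_le.2 hle
    _ ≤ (t : ℝ) / 2 * n + ((t : ℝ) + 1) * ((t : ℝ) + 2) / 2 := by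
        have hcast := (Nat.cast_le (α := ℝ)).2 h2E'
        push_cast at hcast
        linarith
end
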